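/- arXiv:1710.06335 — 8 statements merged into one kernel-verified Lean document; each statement's English description precedes it below -/
import Mathlib

section
/- Let q be an odd prime power and let t, v be elements of the algebraic closure of F_{q^2} with t ≠ 0 fixed. The equation t^{q(q+1)} + u^{q+1} = t^q u + t^{q^2} u^q in the unknown u has exactly two solutions, namely u = t and u = t^{q^2}, unless t^{q^2} = t, in which case it has the single solution u = t. -/
/-- In the algebraic closure of `F_{q^2}` (a field of characteristic `p`, `q = p^n`),
for fixed `t ≠ 0` the equation `t^{q(q+1)} + u^{q+1} = t^q u + t^{q^2} u^q` has exactly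
the solutions `u = t` and `u = t^{q^2}` (a single solution when `t^{q^2} = t`). -/
theorem tangent_plane_solutions (p n q : ℕ) (hp : p.Prime) (hn : 0 < n) (hq : q = p ^ n)
    (hodd : Odd q) (Ω : Type*) [Field Ω] [IsAlgClosed Ω] [CharP Ω p]
    (t : Ω) (ht : t ≠ 0) :
    {u : Ω | t ^ (q * (q + 1)) + u ^ (q + 1) = t ^ q * u + t ^ (q ^ 2) * u ^ q}
      = {t, t ^ (q ^ 2)} := by
  have hq0 : q ≠ 0 := by subst hq; exact pow_ne_zero n hp.ne_zero
  have key : ∀ u : Ω, (u - t ^ (q ^ 2)) * (u - t) ^ q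
      = t ^ (q * (q + 1)) + u ^ (q + 1) - (t ^ q * u + t ^ (q ^ 2) * u ^ q) := by
    intro u
    have hfrob : (u - t) ^ q = u ^ q - t ^ q := by
      subst hq
      haveI : Fact p.Prime := ⟨hp⟩
      exact sub_pow_char_pow u t n
    rw [hfrob]; ring
  ext u
  simp only [Set.mem_setOf_eq, Set.mem_insert_iff, Set.mem_singleton_iff]
  constructor
  · intro h
    have h0 : (u - t ^ (q ^ 2)) * (u - t) ^ q = 0 := by rw [key, h]; ring
    rcases mul_eq_zero.mp h0 with h1 | h1
    · right; exact sub_eq_zero.mp h1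
    · left; exact sub_eq_zero.mp (pow_eq_zero_iff hq0 |>.mp h1)
  · rintro (rfl | rfl)
    · have h0 := key u
      rw [sub_self, zero_pow hq0, mul_zero] at h0
      linear_combination -h0
    · have h0 := key (t ^ (q ^ 2))
      rw [sub_self, zero_mul] at h0
      linear_combination -h0
end

section
/- Let q be a prime power and let F(V,T) = (T+V)^{q+1} - 2(TV + (TV)^q) over F_{q^2}. For every fixed v ∈ F_{q^2} \ F_q, the equation F(v,t) = 0 has exactly q+1 distinct solutions t ∈ F_{q^2}. -/
/-!
Write `σ x = x ^ q`, `d = σ v - v ≠ 0` and `s = t - σ v`. Then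
`F(v,t) = s σ(s) - (σ t - t) d`, and the substitution `w = 1 + d / s` (using `σ d = -d`)
turns `F(v,t) = 0` bijectively into the norm equation `w σ(w) = w ^ (q + 1) = 2`.
As `2 ^ (q - 1) = 1` and `Kˣ` is cyclic of order `(q + 1)(q - 1)`, the element `2` is a
`(q + 1)`-st power, so it has exactly `q + 1` such roots.
-/

theorem IsCyclic.exists_pow_eq_of_pow_eq_one {G : Type*} [CommGroup G] [IsCyclic G] [Finite G]
    {k m : ℕ} (hG : Nat.card G = k * m) {a : G} (ha : a ^ m = 1) : ∃ x : G, x ^ k = a := by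
  have hk : 0 < k := Nat.pos_of_mul_pos_right (hG ▸ Nat.card_pos)
  have hle : (powMonoidHom k : G →* G).range ≤ (powMonoidHom m).ker := by
    rintro _ ⟨x, rfl⟩
    rw [MonoidHom.mem_ker, powMonoidHom_apply, powMonoidHom_apply, ← pow_mul, ← hG,
      pow_card_eq_one']
  have hcard :
      Nat.card (powMonoidHom m : G →* G).ker ≤ Nat.card (powMonoidHom k : G →* G).range := by
    rw [IsCyclic.card_powMonoidHom_range, IsCyclic.card_powMonoidHom_ker, hG,
      Nat.gcd_mul_left_left, Nat.gcd_mul_right_left, Nat.mul_div_cancel_left _ hk]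
  have ha : a ∈ (powMonoidHom m : G →* G).ker := ha
  rwa [← Subgroup.eq_of_le_of_card_ge hle hcard] at ha

theorem FiniteField.ncard_pow_eq_of_pow_eq_one {K : Type*} [Field K] [Fintype K] {k m : ℕ}
    (hK : Fintype.card K = k * m + 1) {a : K} (ha : a ^ m = 1) :
    {w : K | w ^ k = a}.ncard = k := by
  classical
  have hunits : Fintype.card Kˣ = k * m := by rw [Fintype.card_units, hK, Nat.add_sub_cancel]
  have hk : 0 < k := Nat.pos_of_mul_pos_right (hunits ▸ Fintype.card_pos)
  have hm : m ≠ 0 := (Nat.pos_of_mul_pos_left (hunits ▸ Fintype.card_pos)).ne'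
  have ha0 : a ≠ 0 := by
    rintro rfl
    exact zero_ne_one ((zero_pow hm).symm.trans ha)
  obtain ⟨ζ, hζ⟩ : ∃ ζ : Kˣ, orderOf ζ = k := by
    have := IsCyclic.card_orderOf_eq_totient (α := Kˣ) (hunits ▸ dvd_mul_right k m)
    obtain ⟨ζ, hζ⟩ := Finset.card_pos.mp (this ▸ Nat.totient_pos.mpr hk)
    exact ⟨ζ, (Finset.mem_filter.mp hζ).2⟩
  have hprim : IsPrimitiveRoot (ζ : K) k :=
    IsPrimitiveRoot.coe_units_iff.mpr (hζ ▸ IsPrimitiveRoot.orderOf ζ)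
  obtain ⟨α, hα⟩ := IsCyclic.exists_pow_eq_of_pow_eq_one (Nat.card_eq_fintype_card.trans hunits)
    (Units.pow_ofPowEqOne ha hm)
  have hroots : {w : K | w ^ k = a} = ↑(Polynomial.nthRoots k a).toFinset := by
    ext w
    simp [Polynomial.mem_nthRoots hk]
  rw [hroots, Set.ncard_coe_finset, Multiset.toFinset_card_of_nodup (hprim.nthRoots_nodup ha0),
    hprim.card_nthRoots, if_pos ⟨α, by simpa using congrArg Units.val hα⟩]

section Conjugation

variable {K : Type*} [Field K] (σ : K →+* K)

/-- The paper's `F(v,t)`, with the Frobenius `x ↦ x ^ q` abstracted to `σ`. -/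
def F (v t : K) : K := (t + v) * σ (t + v) - 2 * (t * v + σ (t * v))

variable {σ} (hσ : ∀ x, σ (σ x) = x)
include hσ

theorem F_eq (v t : K) :
    F σ v t = (t - σ v) * σ (t - σ v) - (σ t - t) * (σ v - v) := by
  simp only [F, map_add, map_sub, map_mul, hσ]
  ring

theorem setOf_F_eq_zero_eq_image {v : K} (hv : σ v ≠ v) :
    {t | F σ v t = 0} = (fun w => σ v + (σ v - v) / (w - 1)) '' {w | w * σ w = 2} := by
  have hd : σ v - v ≠ 0 := sub_ne_zero.mpr hv
  ext t
  obtain ⟨s, rfl⟩ : ∃ s, t = σ v + s := ⟨t - σ v, by ring⟩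
  simp only [Set.mem_ofPred_eq, Set.mem_image, F_eq hσ, map_add, hσ, add_sub_cancel_left,
    add_right_inj]
  constructor
  · intro hs
    have hs0 : s ≠ 0 := by
      rintro rfl
      simp only [zero_mul, map_zero, add_zero, zero_sub, neg_eq_zero, mul_eq_zero,
        sub_eq_zero] at hs
      exact hv (by tauto)
    have hσs0 : σ s ≠ 0 := (map_ne_zero σ).mpr hs0
    refine ⟨1 + (σ v - v) / s, ?_, ?_⟩
    · simp only [map_add, map_one, map_div₀, map_sub, hσ]
      field_simp
      linear_combination (-1) * hs
    · rw [add_sub_cancel_left, div_div_cancel₀ hd]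
  · rintro ⟨w, hw, rfl⟩
    have hw1 : w - 1 ≠ 0 := by
      rintro hw1
      rw [sub_eq_zero.mp hw1, map_one, one_mul, ← one_add_one_eq_two, left_eq_add] at hw
      exact one_ne_zero hw
    have hσw1 : σ w - 1 ≠ 0 := fun h => hw1 (by rw [← hσ w, sub_eq_zero.mp h, map_one, sub_self])
    simp only [map_sub, map_div₀, map_one, hσ]
    field_simp
    linear_combination (σ v - v) ^ 2 * hw

theorem ncard_setOf_F_eq_zero {v : K} (hv : σ v ≠ v) :
    {t | F σ v t = 0}.ncard = {w | w * σ w = 2}.ncard := by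
  rw [setOf_F_eq_zero_eq_image hσ hv]
  refine Set.ncard_image_of_injective _ fun w₁ w₂ h => ?_
  simpa [div_eq_mul_inv, sub_ne_zero.mpr hv] using h

end Conjugation

/-- For `F(V,T) = (T+V)^{q+1} - 2(TV + (TV)^q)` over `F_{q^2}` and any fixed
`v ∈ F_{q^2} \ F_q`, the equation `F(v,t) = 0` has exactly `q+1` solutions `t ∈ F_{q^2}`. -/
theorem F_vt_solution_count (q : ℕ) (hq : IsPrimePow q) (hodd : Odd q)
    (K : Type*) [Field K] [Fintype K] (hK : Fintype.card K = q ^ 2)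
    (v : K) (hv : v ^ q ≠ v) :
    {t : K | (t + v) ^ (q + 1) - 2 * (t * v + (t * v) ^ q) = 0}.ncard = q + 1 := by
  obtain ⟨p, k, hp, -, rfl⟩ := hq
  have := Fact.mk (Nat.prime_iff.mpr hp)
  have : CharP K p := charP_of_card_eq_prime_pow (f := k * 2) (by rw [hK, pow_mul])
  let σ := iterateFrobenius K p k
  have hσ_apply : ∀ x, σ x = x ^ p ^ k := fun _ => rfl
  have hσ : ∀ x, σ (σ x) = x := fun x => by
    rw [hσ_apply, hσ_apply, ← pow_mul, ← sq, ← hK, FiniteField.pow_card]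
  have h2 : (2 : K) ≠ 0 := Ring.two_ne_zero fun h => by
    simpa [hK, Nat.odd_iff.mp hodd, Nat.pow_mod] using FiniteField.even_card_iff_char_two.mp h
  have h2pow : (2 : K) ^ (p ^ k - 1) = 1 := by
    have : (2 : K) ^ (p ^ k - 1) * 2 = 2 := by
      rw [← pow_succ, Nat.sub_add_cancel hodd.pos]
      exact map_ofNat σ 2
    simpa [h2] using this
  have hcard : Fintype.card K = (p ^ k + 1) * (p ^ k - 1) + 1 := by
    obtain ⟨r, hr⟩ := hodd
    rw [hK, hr, Nat.add_sub_cancel]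
    ring
  calc _ = {t | F σ v t = 0}.ncard := by simp only [F, hσ_apply, ← pow_succ']
    _ = {w | w * σ w = 2}.ncard := ncard_setOf_F_eq_zero hσ hv
    _ = p ^ k + 1 := by
      simp only [hσ_apply, ← pow_succ']
      exact FiniteField.ncard_pow_eq_of_pow_eq_one hcard h2pow
end

section
/- Let q be a prime power with q ≡ 1 (mod 4), and let (v,t) ∈ (F_{q^2}\F_q)^2 satisfy (t+v)^{q+1} = 2(tv + (tv)^q). If a linear fractional map f with coefficients in F_q satisfies f(v) = t and f(t) = v, then f has order 2 and f lies in PGL(2,q) \ PSL(2,q). -/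
open Polynomial in
/-- In a finite extension `K` of a field `F` with `q` elements, any solution of
`x ^ q = x` lies in the image of `F`. -/
lemma aux_mem_range_of_pow_card_eq (q : ℕ) (hq2 : 2 ≤ q) {F K : Type*} [Field F] [Fintype F]
    [Field K] [Fintype K] [Algebra F K] (hF : Fintype.card F = q)
    (x : K) (hx : x ^ q = x) : x ∈ Set.range (algebraMap F K) := by
  classical
  by_contra hxr
  have hA : Function.Injective (algebraMap F K) := (algebraMap F K).injective
  set f : K[X] := X ^ q - X with hf
  have hf0 : f ≠ 0 := by
    intro h
    have hc : f.coeff q = 0 := by rw [h]; simp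
    rw [hf, Polynomial.coeff_sub, Polynomial.coeff_X_pow, Polynomial.coeff_X,
      if_pos rfl, if_neg (by omega : ¬ 1 = q)] at hc
    norm_num at hc
  have hroot : ∀ y : K, y ^ q = y → y ∈ f.roots.toFinset := by
    intro y hy
    rw [Multiset.mem_toFinset, mem_roots hf0]
    simp [hf, IsRoot, sub_eq_zero, hy]
  have hsub : insert x ((Finset.univ : Finset F).image (algebraMap F K)) ⊆ f.roots.toFinset := by
    intro y hy
    rcases Finset.mem_insert.mp hy with rfl | hy
    · exact hroot _ hx
    · obtain ⟨a, _, rfl⟩ := Finset.mem_image.mp hy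
      apply hroot
      rw [← map_pow]
      congr 1
      rw [← hF]; exact FiniteField.pow_card a
  have hx' : x ∉ (Finset.univ : Finset F).image (algebraMap F K) := by
    intro h; obtain ⟨a, _, rfl⟩ := Finset.mem_image.mp h; exact hxr ⟨a, rfl⟩
  have hcard1 : q + 1 ≤ f.roots.toFinset.card := by
    have h1 : ((Finset.univ : Finset F).image (algebraMap F K)).card = q := by
      rw [Finset.card_image_of_injective _ hA, Finset.card_univ, hF]
    calc q + 1 = (insert x ((Finset.univ : Finset F).image (algebraMap F K))).card := by
          rw [Finset.card_insert_of_notMem hx', h1]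
    _ ≤ _ := Finset.card_le_card hsub
  have hcard2 : f.roots.toFinset.card ≤ q := by
    calc f.roots.toFinset.card ≤ Multiset.card f.roots := f.roots.toFinset_card_le
    _ ≤ f.natDegree := f.card_roots'
    _ ≤ q := by
      refine le_trans (natDegree_sub_le _ _) ?_
      simp only [natDegree_X_pow, natDegree_X]
      omega
  omega

/-- If `q ≡ 1 (mod 4)`, `(v,t) ∈ (F_{q^2}\F_q)^2` satisfies
`(t+v)^{q+1} = 2(tv + (tv)^q)`, and a linear fractional map with coefficients
`α,β,γ,δ ∈ F_q` interchanges `v` and `t`, then the map is an involution (`δ = -α`)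
lying in `PGL(2,q) \ PSL(2,q)` (its determinant is a non-square in `F_q`). -/
theorem interchanging_map_is_odd_involution (q : ℕ) (hq : IsPrimePow q) (h4 : q % 4 = 1)
    (F K : Type*) [Field F] [Fintype F] [Field K] [Fintype K] [Algebra F K]
    (hF : Fintype.card F = q) (hK : Fintype.card K = q ^ 2)
    (v t : K) (hv : v ∉ Set.range (algebraMap F K)) (ht : t ∉ Set.range (algebraMap F K))
    (hvt : (t + v) ^ (q + 1) = 2 * (t * v + (t * v) ^ q))
    (α β γ δ : F) (hdet : α * δ - β * γ ≠ 0)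
    (h1 : algebraMap F K α * v + algebraMap F K β
        = t * (algebraMap F K γ * v + algebraMap F K δ))
    (h2 : algebraMap F K α * t + algebraMap F K β
        = v * (algebraMap F K γ * t + algebraMap F K δ)) :
    δ = -α ∧ ¬ IsSquare (α * δ - β * γ) := by
  obtain ⟨p, k, hpp, hk, hpk⟩ := hq
  have hp : p.Prime := Nat.prime_iff.mpr hpp
  haveI : Fact p.Prime := ⟨hp⟩
  have hq2 : 2 ≤ q := by
    calc 2 ≤ p := hp.two_le
    _ ≤ p ^ k := Nat.le_self_pow hk.ne' p
    _ = q := hpk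
  obtain ⟨n, hn⟩ : ∃ n, q = 4 * n + 1 := ⟨q / 4, by omega⟩
  have hqodd : Odd q := ⟨2 * n, by omega⟩
  -- characteristic of K is p
  have hKcharp : CharP K p := by
    obtain ⟨m, hcp, hcard⟩ := FiniteField.card K (ringChar K)
    have hdvd : p ∣ ringChar K := by
      have h1 : p ∣ ringChar K ^ (m : ℕ) := by
        rw [← hcard, hK, ← hpk, ← pow_mul]
        exact dvd_pow_self p (by positivity)
      exact hp.dvd_of_dvd_pow h1
    have : p = ringChar K := ((Nat.prime_dvd_prime_iff_eq hp hcp).mp hdvd)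
    rw [this]; exact ringChar.charP K
  haveI := hKcharp
  -- Frobenius is additive
  have hqK : ∀ x y : K, (x + y) ^ q = x ^ q + y ^ q := by
    intro x y; rw [← hpk]; exact add_pow_char_pow x y p k
  have hsK : ∀ x y : K, (x - y) ^ q = x ^ q - y ^ q := by
    intro x y; rw [← hpk]; exact sub_pow_char_pow x y k
  have hxq2 : ∀ x : K, (x ^ q) ^ q = x := by
    intro x
    rw [← pow_mul, (by ring : q * q = q ^ 2), ← hK]
    exact FiniteField.pow_card x
  have hA : Function.Injective (algebraMap F K) := (algebraMap F K).injective
  have hfixF : ∀ a : F, (algebraMap F K a) ^ q = algebraMap F K a := by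
    intro a
    rw [← map_pow]
    congr 1
    rw [← hF]; exact FiniteField.pow_card a
  have h2K : (2 : K) ≠ 0 := by
    intro h
    have h2 : ((2 : ℕ) : K) = 0 := by exact_mod_cast h
    have := (CharP.cast_eq_zero_iff K p 2).mp h2
    have hp2 : p = 2 := ((Nat.prime_dvd_prime_iff_eq hp Nat.prime_two).mp this)
    have : 2 ∣ q := by rw [← hpk, hp2]; exact dvd_pow_self 2 hk.ne'
    omega
  have hmap2 : algebraMap F K 2 = 2 := map_ofNat _ 2
  have h2q : (2 : K) ^ q = 2 := by rw [← hmap2]; exact hfixF 2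
  have hat' : (t ^ q) ^ q = t := hxq2 t
  have hbv' : (v ^ q) ^ q = v := hxq2 v
  -- rewrite the main condition
  have hvt' : (t ^ q + v ^ q) * (t + v) = 2 * (t * v + t ^ q * v ^ q) := by
    rw [pow_succ, hqK, mul_pow] at hvt
    exact hvt
  have hbne : v ^ q ≠ v := by
    intro h
    exact hv (aux_mem_range_of_pow_card_eq q hq2 hF v h)
  have hane : t ^ q ≠ t := by
    intro h
    exact ht (aux_mem_range_of_pow_card_eq q hq2 hF t h)
  -- t ≠ v
  have htv : t ≠ v := by
    intro h
    apply hane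
    have hvt'' : (t ^ q + t ^ q) * (t + t) = 2 * (t * t + t ^ q * t ^ q) := by
      rw [h] at hvt' ⊢; exact hvt'
    have h0 : (2 : K) * ((t - t ^ q) * (t - t ^ q)) = 0 := by linear_combination -hvt''
    rcases mul_eq_zero.mp h0 with h' | h'
    · exact absurd h' h2K
    · have := mul_self_eq_zero.mp h'
      have : t ^ q = t := by linear_combination -this
      exact this
  have htv0 : t - v ≠ 0 := sub_ne_zero.mpr htv
  -- δ = -α
  have hkey : (algebraMap F K α + algebraMap F K δ) * (v - t) = 0 := by
    linear_combination h1 - h2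
  have hδ : δ = -α := by
    rcases mul_eq_zero.mp hkey with h' | h'
    · have : algebraMap F K (α + δ) = algebraMap F K 0 := by
        rw [map_add, map_zero]; exact h'
      have h5 : α + δ = 0 := hA this
      linear_combination h5
    · exact absurd (sub_eq_zero.mp h') (Ne.symm htv)
  subst hδ
  rw [map_neg] at h1 h2
  refine ⟨rfl, ?_⟩
  -- main determinant relation setup
  have E1 : (2 : K) * (algebraMap F K γ * (t * v))
      = 2 * (algebraMap F K α * (t + v) + algebraMap F K β) := by
    linear_combination -h1 - h2
  have E1' : algebraMap F K γ * (t * v)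
      = algebraMap F K α * (t + v) + algebraMap F K β := mul_left_cancel₀ h2K E1
  have E2 : algebraMap F K γ * (t ^ q * v ^ q)
      = algebraMap F K α * (t ^ q + v ^ q) + algebraMap F K β := by
    calc algebraMap F K γ * (t ^ q * v ^ q) = (algebraMap F K γ * (t * v)) ^ q := by
          rw [mul_pow, mul_pow, hfixF]
    _ = (algebraMap F K α * (t + v) + algebraMap F K β) ^ q := by rw [E1']
    _ = algebraMap F K α * (t ^ q + v ^ q) + algebraMap F K β := by
          rw [hqK, mul_pow, hfixF, hqK, hfixF]
  -- γ ≠ 0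
  have hγ0 : γ ≠ 0 := by
    intro hγ
    subst hγ
    rw [map_zero, zero_mul] at E1' E2
    have hα : α ≠ 0 := by
      intro h; apply hdet; rw [h]; ring
    have hαK : algebraMap F K α ≠ 0 := by
      intro h
      exact hα (hA (by rw [h, map_zero]))
    have hS : algebraMap F K α * ((t ^ q + v ^ q) - (t + v)) = 0 := by
      linear_combination E1' - E2
    have hS' : t ^ q + v ^ q = t + v := by
      rcases mul_eq_zero.mp hS with h' | h'
      · exact absurd h' hαK
      · linear_combination h'
    have hW2 : (t - v) ^ 2 = 2 * (t ^ q * v ^ q) - 2 * (t * v) := by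
      linear_combination hvt' - (t + v) * hS'
    have hX2 : (t ^ q - v ^ q) ^ 2 = -((t - v) ^ 2) := by
      calc (t ^ q - v ^ q) ^ 2 = ((t - v) ^ q) ^ 2 := by rw [hsK]
      _ = ((t - v) ^ 2) ^ q := by rw [← pow_mul, ← pow_mul, mul_comm]
      _ = (2 * (t ^ q * v ^ q) - 2 * (t * v)) ^ q := by rw [hW2]
      _ = 2 * (t * v) - 2 * (t ^ q * v ^ q) := by
            rw [hsK, mul_pow, mul_pow, mul_pow, mul_pow, hat', hbv', h2q]
      _ = -((t - v) ^ 2) := by linear_combination hW2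
    have hq2n : (t - v) ^ (2 * q) = -((t - v) ^ 2) := by
      calc (t - v) ^ (2 * q) = ((t - v) ^ q) ^ 2 := by rw [mul_comm, pow_mul]
      _ = (t ^ q - v ^ q) ^ 2 := by rw [hsK]
      _ = -((t - v) ^ 2) := hX2
    have h8n : (t - v) ^ (8 * n) = -1 := by
      have e1 : (t - v) ^ 2 * (t - v) ^ (8 * n) = (t - v) ^ 2 * (-1) := by
        rw [← pow_add, (by omega : 2 + 8 * n = 2 * q), hq2n]; ring
      exact mul_left_cancel₀ (pow_ne_zero 2 htv0) e1
    have hcard1 : (t - v) ^ (q ^ 2 - 1) = 1 := by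
      rw [← hK]; exact FiniteField.pow_card_sub_one_eq_one _ htv0
    have hexp' : q ^ 2 = 8 * n * (2 * n + 1) + 1 := by rw [hn]; ring
    have hexp : q ^ 2 - 1 = 8 * n * (2 * n + 1) := by omega
    have hfin : (1 : K) = -1 := by
      calc (1 : K) = (t - v) ^ (q ^ 2 - 1) := hcard1.symm
      _ = ((t - v) ^ (8 * n)) ^ (2 * n + 1) := by rw [hexp, pow_mul]
      _ = (-1 : K) ^ (2 * n + 1) := by rw [h8n]
      _ = -1 := Odd.neg_one_pow ⟨n, by ring⟩
    exact h2K (by linear_combination hfin)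
  have hγK : algebraMap F K γ ≠ 0 := by
    intro h
    exact hγ0 (hA (by rw [h, map_zero]))
  -- the two conjugate quadratic relations
  have star1 : algebraMap F K γ * (t - v) ^ 2
      = ((t ^ q + v ^ q) - (t + v)) * (2 * algebraMap F K α - algebraMap F K γ * (t + v)) := by
    linear_combination (algebraMap F K γ) * hvt' + 2 * E2 - 2 * E1'
  have star2 : algebraMap F K γ * (t ^ q - v ^ q) ^ 2
      = ((t + v) - (t ^ q + v ^ q))
        * (2 * algebraMap F K α - algebraMap F K γ * (t ^ q + v ^ q)) := by
    linear_combination (algebraMap F K γ) * hvt' + 2 * E1' - 2 * E2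
  have hu0 : (t ^ q + v ^ q) - (t + v) ≠ 0 := by
    intro h
    have h0 : algebraMap F K γ * (t - v) ^ 2 = 0 := by rw [star1, h, zero_mul]
    rcases mul_eq_zero.mp h0 with h' | h'
    · exact hγK h'
    · exact pow_ne_zero 2 htv0 h'
  have hab : t ^ q - v ^ q ≠ 0 := by
    intro h
    apply htv
    have h' : t ^ q = v ^ q := by linear_combination h
    calc t = (t ^ q) ^ q := hat'.symm
    _ = (v ^ q) ^ q := by rw [h']
    _ = v := hbv'
  have hm0 : (t - v) * (t ^ q - v ^ q) ≠ 0 := mul_ne_zero htv0 hab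
  have huq : ((t ^ q + v ^ q) - (t + v)) ^ q = -((t ^ q + v ^ q) - (t + v)) := by
    rw [hsK, hqK, hqK, hat', hbv']; ring
  have hmq : ((t - v) * (t ^ q - v ^ q)) ^ q = (t - v) * (t ^ q - v ^ q) := by
    rw [mul_pow, hsK, hsK, hat', hbv']; ring
  -- the key determinant identity
  have hprod : (algebraMap F K γ * (t - v) ^ 2) * (algebraMap F K γ * (t ^ q - v ^ q) ^ 2)
      = (((t ^ q + v ^ q) - (t + v)) * (2 * algebraMap F K α - algebraMap F K γ * (t + v)))
        * (((t + v) - (t ^ q + v ^ q))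
            * (2 * algebraMap F K α - algebraMap F K γ * (t ^ q + v ^ q))) := by
    rw [star1, star2]
  have key : (algebraMap F K γ) ^ 2 * ((t - v) * (t ^ q - v ^ q)) ^ 2
      = -(4 * ((algebraMap F K α) ^ 2 + algebraMap F K β * algebraMap F K γ))
        * ((t ^ q + v ^ q) - (t + v)) ^ 2 := by
    linear_combination hprod
      - ((t ^ q + v ^ q) - (t + v)) ^ 2 * (algebraMap F K γ) ^ 2 * hvt'
      - 2 * ((t ^ q + v ^ q) - (t + v)) ^ 2 * (algebraMap F K γ) * E1'
      - 2 * ((t ^ q + v ^ q) - (t + v)) ^ 2 * (algebraMap F K γ) * E2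
  -- conclude: the determinant is not a square
  rintro ⟨e, he⟩
  have he0 : e ≠ 0 := by
    intro h; rw [h, mul_zero] at he; exact hdet he
  have heK : algebraMap F K e ≠ 0 := by
    intro h; exact he0 (hA (by rw [h, map_zero]))
  have heK2 : -((algebraMap F K α) ^ 2 + algebraMap F K β * algebraMap F K γ)
      = (algebraMap F K e) ^ 2 := by
    have h := congrArg (algebraMap F K) he
    simp only [map_sub, map_mul, map_neg] at h
    linear_combination h
  have key2 : (algebraMap F K γ * ((t - v) * (t ^ q - v ^ q))) ^ 2
      = (2 * algebraMap F K e * ((t ^ q + v ^ q) - (t + v))) ^ 2 := by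
    linear_combination key + 4 * ((t ^ q + v ^ q) - (t + v)) ^ 2 * heK2
  have hfactor : (algebraMap F K γ * ((t - v) * (t ^ q - v ^ q))
        - 2 * algebraMap F K e * ((t ^ q + v ^ q) - (t + v)))
      * (algebraMap F K γ * ((t - v) * (t ^ q - v ^ q))
        + 2 * algebraMap F K e * ((t ^ q + v ^ q) - (t + v))) = 0 := by
    linear_combination key2
  have hfinal : ∀ heq : algebraMap F K γ * ((t - v) * (t ^ q - v ^ q))
      = 2 * algebraMap F K e * ((t ^ q + v ^ q) - (t + v)), False := by
    intro heq
    have hq1 : (algebraMap F K γ * ((t - v) * (t ^ q - v ^ q))) ^ q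
        = (2 * algebraMap F K e * ((t ^ q + v ^ q) - (t + v))) ^ q := by rw [heq]
    rw [mul_pow, hfixF, hmq, mul_pow, mul_pow, h2q, hfixF, huq] at hq1
    -- hq1 : γ * m = 2 * e * -(u);  heq : γ * m = 2 * e * u
    have h4' : (4 : K) * (algebraMap F K e * ((t ^ q + v ^ q) - (t + v))) = 0 := by
      linear_combination hq1 - heq
    rcases mul_eq_zero.mp h4' with h' | h'
    · exact (by rw [show (4 : K) = 2 * 2 by norm_num]; exact mul_ne_zero h2K h2K : (4 : K) ≠ 0) h'
    · rcases mul_eq_zero.mp h' with h'' | h''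
      · exact heK h''
      · exact hu0 h''
  rcases mul_eq_zero.mp hfactor with h' | h'
  · exact hfinal (by linear_combination h')
  · -- here γ * m = -(2 * e * u); raise to the q-th power
    have heq : algebraMap F K γ * ((t - v) * (t ^ q - v ^ q))
        = -(2 * algebraMap F K e * ((t ^ q + v ^ q) - (t + v))) := by linear_combination h'
    have hq1 : (algebraMap F K γ * ((t - v) * (t ^ q - v ^ q))) ^ q
        = (-(2 * algebraMap F K e * ((t ^ q + v ^ q) - (t + v)))) ^ q := by rw [heq]
    rw [hqodd.neg_pow, mul_pow, hfixF, hmq, mul_pow, mul_pow, h2q, hfixF, huq] at hq1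
    apply hfinal
    linear_combination hq1
end

section
/- Let q be an odd prime power and ω a non-square in F_q. Consider unknowns α,β,γ,δ ∈ F_q with αδ - βγ ≠ 0 satisfying 4ωαγ = 2αβ + βδ and β^2 = 4ω(α^2 - αδ - βγ). Then up to a nonzero scalar, the solutions are exactly: α = ξ^2 + 4ω, β = (4ω+ξ^2)ξ, γ = ξ(-ξ^2+12ω)/(4ω), δ = 4ω - 3ξ^2 for ξ ∈ F_q, together with the exceptional solution α = δ = 0, β = 1, γ = -(4ω)^{-1}. -/
/-!
Both equations are homogeneous quadratics, so the solution set is stable under scaling.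
If `α ≠ 0`, put `ξ = β / α`; eliminating `γ` between the two equations gives
`δ (4ω + ξ²) = α (4ω - 3ξ²)`. Here `4ω + ξ² ≠ 0`, since otherwise the left side vanishes while
the right side is `16ωα ≠ 0`; so `c = α / (ξ² + 4ω)` scales the `ξ`-solution to `(α, β, γ, δ)`.
If `α = 0`, then `β ≠ 0` by nondegeneracy and the equations force `δ = 0`, `γ = -β / (4ω)`.
-/

lemma two_ne_zero_of_odd_card {F : Type*} [Field F] [Fintype F]
    (h : Odd (Fintype.card F)) : (2 : F) ≠ 0 :=
  Ring.two_ne_zero fun hchar => by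
    simpa [FiniteField.even_card_of_char_two hchar] using Nat.odd_iff.mp h

section

variable {F : Type*} [Field F]

def IsSolution (ω α β γ δ : F) : Prop :=
  4 * ω * α * γ = 2 * α * β + β * δ ∧ β ^ 2 = 4 * ω * (α ^ 2 - α * δ - β * γ)

variable {ω α β γ δ : F}

lemma IsSolution.smul (h : IsSolution ω α β γ δ) (c : F) :
    IsSolution ω (c * α) (c * β) (c * γ) (c * δ) := by
  obtain ⟨e₁, e₂⟩ := h
  constructor
  · linear_combination c ^ 2 * e₁
  · linear_combination c ^ 2 * e₂

lemma isSolution_param (h4 : (4 : F) ≠ 0) (hω : ω ≠ 0) (ξ : F) :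
    IsSolution ω (ξ ^ 2 + 4 * ω) ((4 * ω + ξ ^ 2) * ξ) (ξ * (-ξ ^ 2 + 12 * ω) / (4 * ω))
      (4 * ω - 3 * ξ ^ 2) := by
  constructor <;> field_simp <;> ring

lemma isSolution_exceptional (h4 : (4 : F) ≠ 0) (hω : ω ≠ 0) :
    IsSolution ω 0 1 (-(4 * ω)⁻¹) 0 := by
  constructor <;> field_simp <;> ring

lemma IsSolution.eq_param_of_ne_zero (h4 : (4 : F) ≠ 0) (hω : ω ≠ 0)
    (h : IsSolution ω α β γ δ) (hα : α ≠ 0) :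
    ∃ c : F, c ≠ 0 ∧ ∃ ξ : F,
      α = c * (ξ ^ 2 + 4 * ω) ∧
      β = c * ((4 * ω + ξ ^ 2) * ξ) ∧
      γ = c * (ξ * (-ξ ^ 2 + 12 * ω) / (4 * ω)) ∧
      δ = c * (4 * ω - 3 * ξ ^ 2) := by
  obtain ⟨ξ, rfl⟩ : ∃ ξ, β = α * ξ := ⟨β / α, by field_simp⟩
  obtain ⟨e₁, e₂⟩ := h
  have hγ : 4 * ω * γ = ξ * (2 * α + δ) :=
    mul_left_cancel₀ hα (by linear_combination e₁)
  have hδ : δ * (4 * ω + ξ ^ 2) = α * (4 * ω - 3 * ξ ^ 2) :=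
    mul_left_cancel₀ hα (by linear_combination e₂ - α * ξ * hγ)
  have hden : ξ ^ 2 + 4 * ω ≠ 0 := by
    intro h0
    have : α * (4 * (4 * ω)) = 0 := by linear_combination -hδ + (δ + 3 * α) * h0
    exact mul_ne_zero hα (mul_ne_zero h4 (mul_ne_zero h4 hω)) this
  refine ⟨α / (ξ ^ 2 + 4 * ω), div_ne_zero hα hden, ξ, ?_, ?_, ?_, ?_⟩
  · field_simp
  · field_simp
    ring
  · field_simp
    linear_combination (ξ ^ 2 + 4 * ω) * hγ + ξ * hδ
  · field_simp
    linear_combination hδ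

lemma IsSolution.eq_exceptional_of_eq_zero (h4 : (4 : F) ≠ 0) (hω : ω ≠ 0)
    (h : IsSolution ω α β γ δ) (hα : α = 0) (hβ : β ≠ 0) :
    δ = 0 ∧ γ = β * (-(4 * ω)⁻¹) := by
  subst hα
  obtain ⟨e₁, e₂⟩ := h
  refine ⟨(mul_eq_zero.mp (by linear_combination -e₁ : β * δ = 0)).resolve_left hβ, ?_⟩
  have hγ : β = -(4 * ω) * γ := mul_left_cancel₀ hβ (by linear_combination e₂)
  rw [hγ]
  field_simp

end

theorem parametrization_of_solutions_general (q : ℕ) (hodd : Odd q)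
    (F : Type*) [Field F] [Fintype F] (hF : Fintype.card F = q)
    (ω : F) (hω : ¬ IsSquare ω)
    (α β γ δ : F) (hdet : α * δ - β * γ ≠ 0) :
    (4 * ω * α * γ = 2 * α * β + β * δ ∧
        β ^ 2 = 4 * ω * (α ^ 2 - α * δ - β * γ)) ↔
      ((∃ c : F, c ≠ 0 ∧ ∃ ξ : F,
          α = c * (ξ ^ 2 + 4 * ω) ∧
          β = c * ((4 * ω + ξ ^ 2) * ξ) ∧
          γ = c * (ξ * (-ξ ^ 2 + 12 * ω) / (4 * ω)) ∧
          δ = c * (4 * ω - 3 * ξ ^ 2)) ∨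
       (∃ c : F, c ≠ 0 ∧ α = 0 ∧ β = c ∧ γ = c * (-(4 * ω)⁻¹) ∧ δ = 0)) := by
  have h2 : (2 : F) ≠ 0 := two_ne_zero_of_odd_card (hF ▸ hodd)
  have h4 : (4 : F) ≠ 0 := by simpa [← two_add_two_eq_four, ← two_mul] using mul_ne_zero h2 h2
  have hω0 : ω ≠ 0 := by rintro rfl; exact hω IsSquare.zero
  change IsSolution ω α β γ δ ↔ _
  constructor
  · intro h
    by_cases hα : α = 0
    · have hβ : β ≠ 0 := by rintro rfl; simp [hα] at hdet
      obtain ⟨hδ, hγ⟩ := h.eq_exceptional_of_eq_zero h4 hω0 hα hβ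
      exact Or.inr ⟨β, hβ, hα, rfl, hγ, hδ⟩
    · exact Or.inl (h.eq_param_of_ne_zero h4 hω0 hα)
  · rintro (⟨c, -, ξ, rfl, rfl, rfl, rfl⟩ | ⟨c, -, hα, hβ, hγ, hδ⟩)
    · exact (isSolution_param h4 hω0 ξ).smul c
    · simpa [hα, hβ, hγ, hδ] using (isSolution_exceptional h4 hω0).smul c

/-- For `ω` a non-square in `F_q` and `α,β,γ,δ ∈ F_q` with `αδ - βγ ≠ 0`, the system
`4ωαγ = 2αβ + βδ`, `β² = 4ω(α² - αδ - βγ)` holds if and only if, up to a nonzero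
scalar, `(α,β,γ,δ)` is of the form
`(ξ²+4ω, (4ω+ξ²)ξ, ξ(-ξ²+12ω)/(4ω), 4ω-3ξ²)` for some `ξ ∈ F_q`, or is the
exceptional solution `(0, 1, -(4ω)⁻¹, 0)`. -/
theorem parametrization_of_solutions (q : ℕ) (hq : IsPrimePow q) (hodd : Odd q)
    (F : Type*) [Field F] [Fintype F] (hF : Fintype.card F = q)
    (ω : F) (hω : ¬ IsSquare ω)
    (α β γ δ : F) (hdet : α * δ - β * γ ≠ 0) :
    (4 * ω * α * γ = 2 * α * β + β * δ ∧
        β ^ 2 = 4 * ω * (α ^ 2 - α * δ - β * γ)) ↔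
      ((∃ c : F, c ≠ 0 ∧ ∃ ξ : F,
          α = c * (ξ ^ 2 + 4 * ω) ∧
          β = c * ((4 * ω + ξ ^ 2) * ξ) ∧
          γ = c * (ξ * (-ξ ^ 2 + 12 * ω) / (4 * ω)) ∧
          δ = c * (4 * ω - 3 * ξ ^ 2)) ∨
       (∃ c : F, c ≠ 0 ∧ α = 0 ∧ β = c ∧ γ = c * (-(4 * ω)⁻¹) ∧ δ = 0)) :=
  parametrization_of_solutions_general q hodd F hF ω hω α β γ δ hdet
end

section
/- Let q be an odd prime power and ω ∈ F_q^*. The plane quartic curve C_4 with affine equation Y^2 = X^4 - 24ωX^2 + 16ω^2 is birationally equivalent over F_q to the elliptic curve with Weierstrass equation (1/(2ω))Y^2 = X^3 - X; equivalently, the affine F_q-point counts satisfy N_q(C_4) - 2 = N_q(C_3) - 1, where C_3 is the projective curve (1/(2ω))Y^2 = X^3 - X. -/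
/-!
On `C_4` the quantity `u = Y - X² + 12ω` never vanishes: `u = 0` would force `128ω² = 0`.
Eliminating `Y` gives `2X²u = -u(u - 8ω)(u - 16ω)`, so `x = 1 - u/(8ω)`, `y = √2·Xu/(16ω)`
maps `C_4` onto `C_3` minus the `2`-torsion point `(1, 0)`, with inverse
`X = √2·y/(1 - x)`, `Y = X² - 12ω + 8ω(1 - x)`. Since `q ≡ 1 (mod 8)`, `2` is a square in `F_q`.
-/

namespace QuarticBirational

variable {F : Type*} [Field F]

def quarticCurve (ω : F) : Set (F × F) :=
  {p | p.2 ^ 2 = p.1 ^ 4 - 24 * ω * p.1 ^ 2 + 16 * ω ^ 2}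

def ellipticCurve (ω : F) : Set (F × F) :=
  {p | (2 * ω)⁻¹ * p.2 ^ 2 = p.1 ^ 3 - p.1}

/-- `r` plays the role of `√2`. -/
def quarticToElliptic (ω r : F) (p : F × F) : F × F :=
  (1 - (p.2 - p.1 ^ 2 + 12 * ω) / (8 * ω), r * p.1 * (p.2 - p.1 ^ 2 + 12 * ω) / (16 * ω))

def ellipticToQuartic (ω r : F) (p : F × F) : F × F :=
  (r * p.2 / (1 - p.1), (r * p.2 / (1 - p.1)) ^ 2 - 12 * ω + 8 * ω * (1 - p.1))

variable {ω r : F}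

lemma mem_quarticCurve {p : F × F} :
    p ∈ quarticCurve ω ↔ p.2 ^ 2 = p.1 ^ 4 - 24 * ω * p.1 ^ 2 + 16 * ω ^ 2 := Iff.rfl

lemma mem_ellipticCurve_iff (h2ω : 2 * ω ≠ 0) {p : F × F} :
    p ∈ ellipticCurve ω ↔ p.2 ^ 2 = 2 * ω * (p.1 ^ 3 - p.1) :=
  inv_mul_eq_iff_eq_mul₀ h2ω

lemma one_zero_mem_ellipticCurve : ((1, 0) : F × F) ∈ ellipticCurve ω := by
  simp [ellipticCurve]

lemma sub_sq_add_ne_zero_of_mem_quarticCurve (hω : ω ≠ 0) (h2 : (2 : F) ≠ 0) {p : F × F}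
    (hp : p ∈ quarticCurve ω) : p.2 - p.1 ^ 2 + 12 * ω ≠ 0 := by
  intro hu
  have h128 : (2 : F) ^ 7 * ω ^ 2 = 0 := by
    linear_combination mem_quarticCurve.mp hp - (p.2 + p.1 ^ 2 - 12 * ω) * hu
  exact mul_ne_zero (pow_ne_zero 7 h2) (pow_ne_zero 2 hω) h128

lemma sub_fst_ne_zero_of_mem_ellipticCurve (h2ω : 2 * ω ≠ 0) {p : F × F}
    (hp : p ∈ ellipticCurve ω \ {(1, 0)}) : 1 - p.1 ≠ 0 := by
  obtain ⟨hpE, hp10⟩ := hp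
  intro h
  have hx : p.1 = 1 := by linear_combination -h
  rw [mem_ellipticCurve_iff h2ω, hx] at hpE
  exact hp10 (Prod.ext hx (pow_eq_zero_iff two_ne_zero |>.mp (by simpa using hpE)))

lemma mapsTo_quarticToElliptic (hω : ω ≠ 0) (h2 : (2 : F) ≠ 0) (hr : r ^ 2 = 2) :
    Set.MapsTo (quarticToElliptic ω r) (quarticCurve ω) (ellipticCurve ω \ {(1, 0)}) := by
  intro p hp
  have hu := sub_sq_add_ne_zero_of_mem_quarticCurve hω h2 hp
  have h8 : (8 : F) ≠ 0 := by exact_mod_cast pow_ne_zero 3 h2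
  have h16 : (16 : F) ≠ 0 := by exact_mod_cast pow_ne_zero 4 h2
  refine ⟨?_, fun h10 => hu ?_⟩
  · rw [mem_ellipticCurve_iff (mul_ne_zero h2 hω)]
    simp only [quarticToElliptic]
    field_simp
    linear_combination 512 * p.1 ^ 2 * (p.2 - p.1 ^ 2 + 12 * ω) ^ 2 * hr
      + 512 * (p.2 - p.1 ^ 2 + 12 * ω) * mem_quarticCurve.mp hp
  · have hx := congrArg Prod.fst h10
    simp only [quarticToElliptic, sub_eq_self, div_eq_zero_iff] at hx
    exact hx.resolve_right (mul_ne_zero h8 hω)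

lemma mapsTo_ellipticToQuartic (hω : ω ≠ 0) (h2 : (2 : F) ≠ 0) (hr : r ^ 2 = 2) :
    Set.MapsTo (ellipticToQuartic ω r) (ellipticCurve ω \ {(1, 0)}) (quarticCurve ω) := by
  intro p hp
  have hx := sub_fst_ne_zero_of_mem_ellipticCurve (mul_ne_zero h2 hω) hp
  have hy := (mem_ellipticCurve_iff (mul_ne_zero h2 hω)).mp hp.1
  rw [mem_quarticCurve]
  simp only [ellipticToQuartic]
  field_simp
  linear_combination 16 * ω * (1 - p.1) ^ 3 * p.2 ^ 2 * hr + 32 * ω * (1 - p.1) ^ 3 * hy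

lemma leftInvOn_ellipticToQuartic (hω : ω ≠ 0) (h2 : (2 : F) ≠ 0) (hr : r ^ 2 = 2) :
    Set.LeftInvOn (ellipticToQuartic ω r) (quarticToElliptic ω r) (quarticCurve ω) := by
  intro p hp
  have hu := sub_sq_add_ne_zero_of_mem_quarticCurve hω h2 hp
  have h8 : (8 : F) ≠ 0 := by exact_mod_cast pow_ne_zero 3 h2
  have h16 : (16 : F) ≠ 0 := by exact_mod_cast pow_ne_zero 4 h2
  have hx : 1 - (quarticToElliptic ω r p).1 = (p.2 - p.1 ^ 2 + 12 * ω) / (8 * ω) := by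
    simp only [quarticToElliptic]; ring
  refine Prod.ext ?_ ?_ <;> simp only [ellipticToQuartic, hx] <;>
    simp only [quarticToElliptic] <;> field_simp
  · linear_combination 8 * p.1 * hr
  · linear_combination 64 * p.1 ^ 2 * (r ^ 2 + 2) * hr

lemma rightInvOn_ellipticToQuartic (hω : ω ≠ 0) (h2 : (2 : F) ≠ 0) (hr : r ^ 2 = 2) :
    Set.RightInvOn (ellipticToQuartic ω r) (quarticToElliptic ω r)
      (ellipticCurve ω \ {(1, 0)}) := by
  intro p hp
  have hx := sub_fst_ne_zero_of_mem_ellipticCurve (mul_ne_zero h2 hω) hp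
  have h8 : (8 : F) ≠ 0 := by exact_mod_cast pow_ne_zero 3 h2
  have h16 : (16 : F) ≠ 0 := by exact_mod_cast pow_ne_zero 4 h2
  refine Prod.ext ?_ ?_ <;> simp only [quarticToElliptic, ellipticToQuartic] <;> field_simp
  · ring
  · linear_combination 8 * ω * p.2 * (1 - p.1) ^ 3 * hr

lemma bijOn_quarticToElliptic (hω : ω ≠ 0) (h2 : (2 : F) ≠ 0) (hr : r ^ 2 = 2) :
    Set.BijOn (quarticToElliptic ω r) (quarticCurve ω) (ellipticCurve ω \ {(1, 0)}) :=
  Set.InvOn.bijOn ⟨leftInvOn_ellipticToQuartic hω h2 hr, rightInvOn_ellipticToQuartic hω h2 hr⟩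
    (mapsTo_quarticToElliptic hω h2 hr) (mapsTo_ellipticToQuartic hω h2 hr)

lemma ncard_quarticCurve_add_one [Finite F] (hω : ω ≠ 0) (h2 : (2 : F) ≠ 0) (hr : r ^ 2 = 2) :
    (quarticCurve ω).ncard + 1 = (ellipticCurve ω).ncard := by
  rw [(bijOn_quarticToElliptic hω h2 hr).ncard_eq, Set.ncard_sdiff_singleton_add_one
    one_zero_mem_ellipticCurve]

end QuarticBirational

open QuarticBirational in
theorem quartic_birational_to_elliptic_general (q : ℕ) (h8 : q % 8 = 1)
    (F : Type*) [Field F] [Fintype F] (hF : Fintype.card F = q)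
    (ω : F) (hω : ω ≠ 0) :
    {x : F × F | x.2 ^ 2 = x.1 ^ 4 - 24 * ω * x.1 ^ 2 + 16 * ω ^ 2}.ncard + 2
      = {x : F × F | (2 * ω)⁻¹ * x.2 ^ 2 = x.1 ^ 3 - x.1}.ncard + 1 := by
  have h2 : (2 : F) ≠ 0 :=
    Ring.two_ne_zero fun h => by have := FiniteField.even_card_iff_char_two.mp h; omega
  obtain ⟨r, hr⟩ : IsSquare (2 : F) := FiniteField.isSquare_two_iff.mpr (by omega)
  have := ncard_quarticCurve_add_one hω h2 (show r ^ 2 = 2 by rw [hr, sq])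
  change (quarticCurve ω).ncard + 2 = (ellipticCurve ω).ncard + 1
  omega

/-- The quartic `C_4 : Y² = X⁴ - 24ωX² + 16ω²` is birationally equivalent over `F_q`
to the elliptic curve `C_3 : (1/(2ω))Y² = X³ - X`.  In terms of point counts (the
nonsingular model of `C_4` has two rational points over its point at infinity, and the
projective curve `C_3` has exactly one point at infinity): the number of affine
`F_q`-points of `C_4`, plus `2`, equals the number of projective `F_q`-points of `C_3`,
i.e. the number of affine points of `C_3` plus `1`. -/
theorem quartic_birational_to_elliptic (q : ℕ) (hq : IsPrimePow q) (h8 : q % 8 = 1)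
    (F : Type*) [Field F] [Fintype F] (hF : Fintype.card F = q)
    (ω : F) (hω : ω ≠ 0) :
    {x : F × F | x.2 ^ 2 = x.1 ^ 4 - 24 * ω * x.1 ^ 2 + 16 * ω ^ 2}.ncard + 2
      = {x : F × F | (2 * ω)⁻¹ * x.2 ^ 2 = x.1 ^ 3 - x.1}.ncard + 1 :=
  quartic_birational_to_elliptic_general q h8 F hF ω hω
end

section
/- Let p be a prime with p ≡ 1 (mod 8), and write p = a^2 + b^2 with a odd, normalized so that the Gaussian integer π = a + bi satisfies π ≡ 1 (mod (-2+2i)). Then the number of F_p-points of the elliptic curve E_3: Y^2 = X^3 - X equals p + 1 - 2a. In particular, N_p(E_3) = p - 1 if and only if p = 1 + 4a'^2 for some integer a' (equivalently a = 1). -/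
/-!
Write `χ` for the quadratic character of `𝔽_p` and `J c = ∑ₓ χ(x) χ(x² + c)` for the
Jacobsthal sum. Counting square roots gives `p + J(-1)` affine points on `E_3`. Since
`J(t² c) = χ(t) J(c)`, the square `J(c)²` only depends on the square class of `c`, and
orthogonality gives `∑_c J(c)² = 2p(p - 1)`; hence `J(-1)² + J(-g)² = 4p` for a nonsquare `g`,
that is, `J(-1) = -2u` with `u² + v² = p`. The sign of `u` is fixed modulo `8`: the Klein
four-group generated by `x ↦ -x` and `x ↦ x⁻¹` acts freely on the `x` with `χ(x³ - x) = -1`,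
so their number is divisible by `4` and `J(-1) ≡ p - 3 ≡ -2 (mod 8)`, i.e. `u ≡ 1 (mod 4)`.
The primary normalisation says `a ≡ 1 (mod 4)`, and a representation `p = a² + b²` with
`a ≡ 1 (mod 4)` is unique up to the sign of `b`, so `a = u`.
-/

open Finset

theorem Int.sq_emod_eight_of_odd {a : ℤ} (ha : Odd a) : a ^ 2 % 8 = 1 := by
  obtain ⟨k, rfl⟩ := ha
  obtain ⟨m, hm⟩ := Int.even_mul_succ_self k
  have : (2 * k + 1) ^ 2 = 4 * (k * (k + 1)) + 1 := by ring
  omega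

theorem four_dvd_of_sq_add_sq {n a b : ℤ} (hn : n % 8 = 1) (h : a ^ 2 + b ^ 2 = n) (ha : Odd a) :
    4 ∣ b := by
  have ha8 := Int.sq_emod_eight_of_odd ha
  obtain ⟨c, rfl⟩ : Even b := by
    by_contra hb
    have := Int.sq_emod_eight_of_odd (Int.not_even_iff_odd.1 hb)
    omega
  obtain ⟨d, rfl⟩ : Even c := by
    by_contra hc
    have := Int.sq_emod_eight_of_odd (Int.not_even_iff_odd.1 hc)
    have : (c + c) ^ 2 = 4 * c ^ 2 := by ring
    omega
  exact ⟨d, by ring⟩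

theorem eq_or_eq_neg_of_sq_add_sq_of_dvd {p a b c d : ℤ} (hp : p ≠ 0) (h1 : a ^ 2 + b ^ 2 = p)
    (h2 : c ^ 2 + d ^ 2 = p) (hdvd : p ∣ a * c + b * d) (hne : a * c + b * d ≠ 0) :
    c = a ∨ c = -a := by
  have hle : p ^ 2 ≤ (a * c + b * d) ^ 2 :=
    Int.natAbs_le_iff_sq_le.1 (Int.natAbs_le_of_dvd_ne_zero hdvd hne)
  -- Brahmagupta–Fibonacci identity
  have hid : (a * c + b * d) ^ 2 + (a * d - b * c) ^ 2 = p ^ 2 := by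
    linear_combination (c ^ 2 + d ^ 2) * h1 + p * h2
  have hcross : a * d - b * c = 0 := by nlinarith [sq_nonneg (a * d - b * c)]
  have hmul : a * (a * c + b * d) = c * p := by linear_combination b * hcross + c * h1
  rcases sq_eq_sq_iff_eq_or_eq_neg.1 (by nlinarith : (a * c + b * d) ^ 2 = p ^ 2) with h | h
  · rw [h] at hmul
    exact Or.inl (mul_right_cancel₀ hp hmul).symm
  · rw [h] at hmul
    exact Or.inr (by linarith [mul_right_cancel₀ hp (by linarith : -a * p = c * p)])

theorem eq_of_sq_add_sq_eq {p a b c d : ℤ} (hp : Prime p) (h1 : a ^ 2 + b ^ 2 = p)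
    (h2 : c ^ 2 + d ^ 2 = p) (ha : a % 4 = 1) (hc : c % 4 = 1) (hb : Even b) :
    a = c := by
  have hp0 : p ≠ 0 := hp.ne_zero
  have hne : ∀ e : ℤ, Even e → a * c + e ≠ 0 := by
    obtain ⟨m, hm⟩ : Odd (a * c) := (Int.odd_iff.2 (by omega)).mul (Int.odd_iff.2 (by omega))
    rintro e ⟨k, rfl⟩
    omega
  have hfactor : (a * c + b * d) * (a * c + b * -d) = p * (a ^ 2 + c ^ 2 - p) := by
    linear_combination (c ^ 2 - p) * h1 - b ^ 2 * h2
  have h2' : c ^ 2 + (-d) ^ 2 = p := by rw [neg_sq]; exact h2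
  have hc : c = a ∨ c = -a := by
    rcases hp.dvd_or_dvd ⟨_, hfactor⟩ with h | h
    · exact eq_or_eq_neg_of_sq_add_sq_of_dvd hp0 h1 h2 h (hne _ (hb.mul_right d))
    · exact eq_or_eq_neg_of_sq_add_sq_of_dvd hp0 h1 h2' h (hne _ (hb.mul_right _))
  omega

theorem GaussianInt.four_dvd_of_primary {a b : ℤ}
    (h : (⟨-2, 2⟩ : GaussianInt) ∣ ⟨a, b⟩ - 1) : 4 ∣ a - 1 - b ∧ 4 ∣ a - 1 + b := by
  obtain ⟨z, hz⟩ := h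
  have hre := congrArg Zsqrtd.re hz
  have him := congrArg Zsqrtd.im hz
  simp only [Zsqrtd.re_sub, Zsqrtd.im_sub, Zsqrtd.re_one, Zsqrtd.im_one, Zsqrtd.re_mul,
    Zsqrtd.im_mul] at hre him
  exact ⟨⟨-z.re, by omega⟩, ⟨-z.im, by omega⟩⟩

theorem four_dvd_card_of_involutive {α : Type*} [DecidableEq α] {f g : α → α}
    (hf : Function.Involutive f) (hg : Function.Involutive g) (hfg : Function.Commute f g)
    {s : Finset α} (hs : ∀ x ∈ s, f x ∈ s ∧ g x ∈ s)
    (hfree : ∀ x ∈ s, f x ≠ x ∧ g x ≠ x ∧ f x ≠ g x) : 4 ∣ #s := by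
  -- `s` is the disjoint union of the orbits `{x, f x, g x, f (g x)}` of the Klein four-group
  -- generated by `f` and `g`, and each orbit has exactly four elements
  let orbit : α → Finset α := fun x => {x, f x, g x, f (g x)}
  have orbit_eq : ∀ x y, y ∈ orbit x → orbit y = orbit x := by
    intro x y hy
    simp only [orbit, mem_insert, mem_singleton] at hy
    rcases hy with rfl | rfl | rfl | rfl <;> ext z <;>
      simp only [orbit, mem_insert, mem_singleton, hf _, hg _, hfg.eq] <;> tauto
  have orbit_subset : ∀ x ∈ s, orbit x ⊆ s := by
    intro x hx y hy
    simp only [orbit, mem_insert, mem_singleton] at hy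
    rcases hy with rfl | rfl | rfl | rfl
    exacts [hx, (hs x hx).1, (hs x hx).2, (hs _ (hs x hx).2).1]
  have card_orbit : ∀ x ∈ s, #(orbit x) = 4 := by
    intro x hx
    obtain ⟨hfx, hgx, hfgx⟩ := hfree x hx
    have hfgx' : f (g x) ≠ g x := (hfree _ (hs x hx).2).1
    refine card_eq_four.2
      ⟨x, f x, g x, f (g x), hfx.symm, hgx.symm, ?_, hfgx, ?_, hfgx'.symm, rfl⟩
    · exact fun h => hfgx (by simpa only [hf (g x)] using congrArg f h)
    · exact fun h => hgx (hf.injective h).symm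
  rw [card_eq_sum_card_image orbit s]
  refine dvd_sum fun O hO => ?_
  obtain ⟨x, hx, rfl⟩ := mem_image.1 hO
  have : {y ∈ s | orbit y = orbit x} = orbit x := by
    ext y
    refine ⟨fun hy => ?_, fun hy => mem_filter.2 ⟨orbit_subset x hx hy, orbit_eq x y hy⟩⟩
    rw [← (mem_filter.1 hy).2]
    simp [orbit]
  rw [this, card_orbit x hx]

theorem ringChar_ne_two_of_odd_card {F : Type*} [Field F] [Fintype F]
    (h : Fintype.card F % 2 = 1) : ringChar F ≠ 2 := fun h2 => by
  have := FiniteField.even_card_iff_char_two.1 h2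
  omega

section QuadraticCharSums

variable {F : Type*} [Field F] [Fintype F] [DecidableEq F]

local notation "χ" => quadraticChar F

theorem sum_quadraticChar_sq : ∑ x : F, χ x ^ 2 = Fintype.card F - 1 := by
  have h : ∀ x : F, χ x ^ 2 = 1 - if x = 0 then 1 else 0 := by
    intro x
    rcases eq_or_ne x 0 with rfl | hx
    · rw [quadraticChar_zero]; simp
    · rw [quadraticChar_sq_one hx, if_neg hx, sub_zero]
  rw [sum_congr rfl fun x _ => h x, sum_sub_distrib, sum_ite_eq']
  simp

theorem sum_quadraticChar_mul_quadraticChar_add (hF : ringChar F ≠ 2) (w : F) :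
    ∑ x : F, χ x * χ (x + w) = if w = 0 then (Fintype.card F : ℤ) - 1 else -1 := by
  split_ifs with hw
  · simp only [hw, add_zero, ← sq, sum_quadraticChar_sq]
  -- substituting `x = -w * y` turns the sum into `χ (-1)` times the Jacobi sum `J(χ, χ)`
  have hJ : jacobiSum χ χ = -χ (-1) := by
    simpa only [(quadraticChar_isQuadratic F).inv] using
      jacobiSum_nontrivial_inv (quadraticChar_ne_one hF)
  have h : ∀ y : F, χ (-w * y) * χ (-w * y + w) = χ (-1) * (χ y * χ (1 - y)) := by
    intro y
    have : χ (-w) * χ w = χ (-1) := by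
      rw [← map_mul, show -w * w = w ^ 2 * (-1) by ring, map_mul, quadraticChar_sq_one' hw,
        one_mul]
    rw [show -w * y + w = w * (1 - y) by ring, map_mul, map_mul, ← this]
    ring
  rw [← (mulLeft_bijective₀ (-w) (neg_ne_zero.2 hw)).sum_comp]
  simp only [h, ← mul_sum]
  rw [← jacobiSum, hJ, mul_neg, ← sq, quadraticChar_sq_one (neg_ne_zero.2 one_ne_zero)]

theorem sum_comp_sq (hF : ringChar F ≠ 2) (h : F → ℤ) :
    ∑ t : F, h (t ^ 2) = ∑ a : F, (χ a + 1) * h a := by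
  rw [sum_comp h (· ^ 2)]
  refine sum_subset_zero_on_sdiff (subset_univ _) (fun a ha => ?_) (fun a _ => ?_)
  · have : ¬IsSquare a := by
      rintro ⟨r, rfl⟩
      exact (mem_sdiff.1 ha).2 (mem_image.2 ⟨r, mem_univ r, sq r⟩)
    rw [quadraticChar_neg_one_iff_not_isSquare.2 this, neg_add_cancel, zero_mul]
  · rw [nsmul_eq_mul, ← quadraticChar_card_sqrts hF a, Set.toFinset_ofPred]

theorem sum_comp_sq_mul_add_comp_sq_mul_nonsquare (hF : ringChar F ≠ 2) (h : F → ℤ)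
    {u g : F} (hu : u ≠ 0) (hg : χ g = -1) :
    ∑ t : F, (h (t ^ 2 * u) + h (t ^ 2 * (g * u))) = 2 * ∑ a : F, h a := by
  have hg0 : g ≠ 0 := by rintro rfl; simp at hg
  have hsq := sum_comp_sq hF (fun a => h (a * u))
  -- multiplying by the nonsquare `g` swaps the squares and the nonsquares
  have hnsq : ∑ t : F, h (t ^ 2 * (g * u)) = ∑ a : F, (1 - χ a) * h (a * u) := by
    rw [sum_comp_sq hF (fun a => h (a * (g * u)))]
    conv_rhs => rw [← (mulRight_bijective₀ g hg0).sum_comp]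
    refine sum_congr rfl fun a _ => ?_
    rw [map_mul, hg, mul_assoc]
    ring
  rw [sum_add_distrib, hsq, hnsq, ← sum_add_distrib, ← (mulRight_bijective₀ u hu).sum_comp h,
    mul_sum]
  exact sum_congr rfl fun a _ => by ring

variable (F) in
def jacobsthalSum (a : F) : ℤ :=
  ∑ x : F, χ x * χ (x ^ 2 + a)

theorem jacobsthalSum_zero (hF : ringChar F ≠ 2) : jacobsthalSum F 0 = 0 := by
  have h : ∀ x : F, χ x * χ (x ^ 2 + 0) = χ x := by
    intro x
    rcases eq_or_ne x 0 with rfl | hx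
    · simp only [quadraticChar_zero, zero_mul]
    · rw [add_zero, quadraticChar_sq_one' hx, mul_one]
  simp only [jacobsthalSum, h, quadraticChar_sum_zero hF]

theorem jacobsthalSum_sq_mul (hF : ringChar F ≠ 2) (t u : F) :
    jacobsthalSum F (t ^ 2 * u) = χ t * jacobsthalSum F u := by
  rcases eq_or_ne t 0 with rfl | ht
  · simp [jacobsthalSum_zero hF]
  rw [jacobsthalSum, jacobsthalSum, ← (mulLeft_bijective₀ t ht).sum_comp, mul_sum]
  refine sum_congr rfl fun x _ => ?_
  rw [show (t * x) ^ 2 + t ^ 2 * u = t ^ 2 * (x ^ 2 + u) by ring, map_mul, map_mul,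
    quadraticChar_sq_one' ht]
  ring

theorem sum_jacobsthalSum_sq_mul_sq (hF : ringChar F ≠ 2) (u : F) :
    ∑ t : F, jacobsthalSum F (t ^ 2 * u) ^ 2 = (Fintype.card F - 1) * jacobsthalSum F u ^ 2 := by
  simp only [jacobsthalSum_sq_mul hF, mul_pow, ← sum_mul, sum_quadraticChar_sq]

theorem sum_quadraticChar_ite_sq_eq (hF : ringChar F ≠ 2) (x : F) :
    ∑ y : F, (if x ^ 2 = y ^ 2 then χ y else 0) = (1 + χ (-1)) * χ x := by
  rcases eq_or_ne x 0 with rfl | hx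
  · simp [eq_comm (a := (0 : F))]
  have hxx : x ≠ -x := fun h => hx ((Ring.eq_self_iff_eq_zero_of_char_ne_two hF).1 h.symm)
  rw [← sum_filter, show ({y | x ^ 2 = y ^ 2} : Finset F) = {x, -x} by
    ext y; rw [mem_filter_univ, eq_comm, sq_eq_sq_iff_eq_or_eq_neg]; simp,
    sum_pair hxx, neg_eq_neg_one_mul, map_mul]
  ring

theorem sum_quadraticChar_add_mul_quadraticChar_add (hF : ringChar F ≠ 2) (u v : F) :
    ∑ a : F, χ (u + a) * χ (v + a) = Fintype.card F * (if u = v then 1 else 0) - 1 := by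
  rw [← (Equiv.subRight u).sum_comp]
  simp only [Equiv.subRight_apply, add_sub_cancel, show ∀ a, v + (a - u) = a + (v - u) by
    intro a; ring, sum_quadraticChar_mul_quadraticChar_add hF, sub_eq_zero, eq_comm (a := v)]
  split_ifs <;> ring

theorem sum_jacobsthalSum_sq (hF : ringChar F ≠ 2) :
    ∑ a : F, jacobsthalSum F a ^ 2 = Fintype.card F * (Fintype.card F - 1) * (1 + χ (-1)) := by
  set q : ℤ := (Fintype.card F : ℤ)
  have hsq : ∀ a : F, jacobsthalSum F a ^ 2
      = ∑ x : F, ∑ y : F, χ x * χ y * (χ (x ^ 2 + a) * χ (y ^ 2 + a)) := fun a => by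
    rw [jacobsthalSum, sq, sum_mul_sum]
    exact sum_congr rfl fun x _ => sum_congr rfl fun y _ => by ring
  calc ∑ a : F, jacobsthalSum F a ^ 2
      = ∑ x : F, ∑ y : F, χ x * χ y * ∑ a : F, χ (x ^ 2 + a) * χ (y ^ 2 + a) := by
        simp only [hsq, mul_sum]
        rw [sum_comm]
        exact sum_congr rfl fun x _ => sum_comm
    _ = q * ∑ x : F, χ x * ∑ y : F, (if x ^ 2 = y ^ 2 then χ y else 0)
          - (∑ x : F, χ x) * ∑ y : F, χ y := by
        simp only [sum_quadraticChar_add_mul_quadraticChar_add hF, mul_sum, sum_mul,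
          ← sum_sub_distrib]
        refine sum_congr rfl fun x _ => sum_congr rfl fun y _ => ?_
        split_ifs <;> ring
    _ = q * (q - 1) * (1 + χ (-1)) := by
        have h : ∀ x : F, χ x * ((1 + χ (-1)) * χ x) = (1 + χ (-1)) * χ x ^ 2 := fun x => by
          ring
        simp only [sum_quadraticChar_ite_sq_eq hF, quadraticChar_sum_zero hF, h, ← mul_sum,
          sum_quadraticChar_sq]
        ring

theorem jacobsthalSum_sq_add_sq_mul_nonsquare (hF : ringChar F ≠ 2) {u g : F} (hu : u ≠ 0)
    (hg : χ g = -1) :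
    jacobsthalSum F u ^ 2 + jacobsthalSum F (g * u) ^ 2 = 2 * Fintype.card F * (1 + χ (-1)) := by
  have hq : (Fintype.card F : ℤ) - 1 ≠ 0 := by
    have := Fintype.one_lt_card (α := F)
    omega
  apply mul_left_cancel₀ hq
  calc ((Fintype.card F : ℤ) - 1) * (jacobsthalSum F u ^ 2 + jacobsthalSum F (g * u) ^ 2)
      = ∑ t : F, (jacobsthalSum F (t ^ 2 * u) ^ 2 + jacobsthalSum F (t ^ 2 * (g * u)) ^ 2) := by
        rw [sum_add_distrib, sum_jacobsthalSum_sq_mul_sq hF, sum_jacobsthalSum_sq_mul_sq hF,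
          mul_add]
    _ = _ := by
        rw [sum_comp_sq_mul_add_comp_sq_mul_nonsquare hF (jacobsthalSum F · ^ 2) hu hg,
          sum_jacobsthalSum_sq hF]
        ring

theorem natCard_setOf_sq_eq (hF : ringChar F ≠ 2) (f : F → F) :
    (Nat.card {x : F × F | x.2 ^ 2 = f x.1} : ℤ) = Fintype.card F + ∑ x : F, χ (f x) := by
  rw [Nat.card_eq_fintype_card, Fintype.card_subtype, card_filter, Fintype.sum_prod_type]
  simp only [← card_filter, Set.mem_ofPred_eq]
  push_cast
  have h : ∀ x : F, ((#{y | y ^ 2 = f x} : ℕ) : ℤ) = χ (f x) + 1 := fun x => by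
    rw [← quadraticChar_card_sqrts hF, Set.toFinset_ofPred]
  simp only [h, sum_add_distrib, sum_const, card_univ, nsmul_eq_mul, mul_one]
  ring

theorem sum_quadraticChar_eq_card_sub (f : F → F) :
    ∑ x : F, χ (f x) = Fintype.card F - #{x | f x = 0} - 2 * #{x | χ (f x) = -1} := by
  have h : ∀ a : F, χ a = 1 - (if a = 0 then 1 else 0) - 2 * (if χ a = -1 then 1 else 0) := by
    intro a
    rcases eq_or_ne a 0 with rfl | ha
    · simp
    · rcases quadraticChar_dichotomy ha with h | h <;> simp [ha, h]
  rw [sum_congr rfl fun x _ => h (f x)]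
  simp only [sum_sub_distrib, ← mul_sum, sum_boole, sum_const, card_univ, nsmul_one]

theorem card_zeros_cube_sub_self (hF : ringChar F ≠ 2) : #{x : F | x ^ 3 - x = 0} = 3 := by
  have h : ({x : F | x ^ 3 - x = 0} : Finset F) = {0, 1, -1} := by
    ext x
    simp only [mem_filter_univ, mem_insert, mem_singleton]
    rw [show x ^ 3 - x = x * ((x - 1) * (x + 1)) by ring, mul_eq_zero, mul_eq_zero, sub_eq_zero,
      add_eq_zero_iff_eq_neg]
  rw [h, card_eq_three]
  exact ⟨0, 1, -1, zero_ne_one, (neg_ne_zero.2 one_ne_zero).symm,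
    (Ring.neg_one_ne_one_of_char_ne_two hF).symm, rfl⟩

theorem quadraticChar_neg_one_of_card_mod_eight (h8 : Fintype.card F % 8 = 1) : χ (-1) = 1 :=
  (quadraticChar_one_iff_isSquare (neg_ne_zero.2 one_ne_zero)).2
    (FiniteField.isSquare_neg_one_iff.2 (by omega))

theorem quadraticChar_two_of_card_mod_eight (h8 : Fintype.card F % 8 = 1) : χ 2 = 1 :=
  (quadraticChar_one_iff_isSquare
    (Ring.two_ne_zero (ringChar_ne_two_of_odd_card (F := F) (by omega)))).2
      (FiniteField.isSquare_two_iff.2 (by omega))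

theorem quadraticChar_eq_one_of_sq_eq_neg_one (h8 : Fintype.card F % 8 = 1) {x : F}
    (hx : x ^ 2 = -1) : χ x = 1 := by
  have hx0 : x ≠ 0 := by rintro rfl; simp at hx
  rw [quadraticChar_one_iff_isSquare hx0,
    FiniteField.isSquare_iff (ringChar_ne_two_of_odd_card (F := F) (by omega)) hx0,
    show Fintype.card F / 2 = 2 * (2 * (Fintype.card F / 8)) by omega, pow_mul, hx, pow_mul]
  simp

theorem four_dvd_card_quadraticChar_cube_sub_self_eq_neg_one (h8 : Fintype.card F % 8 = 1) :
    4 ∣ #{x : F | χ (x ^ 3 - x) = -1} := by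
  have hF := ringChar_ne_two_of_odd_card (F := F) (by omega)
  have hneg := quadraticChar_neg_one_of_card_mod_eight h8
  have hmem : ∀ x : F, χ (x ^ 3 - x) = -1 ↔ χ ((-x) ^ 3 - -x) = -1 := fun x => by
    rw [show (-x) ^ 3 - -x = -1 * (x ^ 3 - x) by ring, map_mul, hneg, one_mul]
  have hinv : ∀ x : F, x ≠ 0 → χ (x⁻¹ ^ 3 - x⁻¹) = χ (x ^ 3 - x) := fun x hx => by
    rw [show x⁻¹ ^ 3 - x⁻¹ = -1 * (x⁻¹ ^ 2) ^ 2 * (x ^ 3 - x) by field_simp; ring, map_mul,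
      map_mul, hneg, quadraticChar_sq_one' (pow_ne_zero 2 (inv_ne_zero hx)), one_mul, one_mul]
  have hne : ∀ x : F, χ (x ^ 3 - x) = -1 → x ≠ 0 ∧ x ^ 2 ≠ 1 ∧ x ^ 2 ≠ -1 := by
    intro x hx
    have h0 : x ^ 3 - x ≠ 0 := fun h => by simp [h] at hx
    refine ⟨fun h => h0 (by simp [h]), fun h => h0 (by linear_combination x * h), fun h => ?_⟩
    rw [show x ^ 3 - x = -1 * 2 * x by linear_combination x * h, map_mul, map_mul, hneg,
      quadraticChar_two_of_card_mod_eight h8, quadraticChar_eq_one_of_sq_eq_neg_one h8 h] at hx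
    norm_num at hx
  refine four_dvd_card_of_involutive neg_involutive inv_involutive (fun x => neg_inv) ?_ ?_
  · intro x hx
    rw [mem_filter_univ] at hx
    simp only [mem_filter_univ, ← hmem, hinv x (hne x hx).1, hx, and_self]
  · intro x hx
    obtain ⟨h0, h1, h2⟩ := hne x ((mem_filter_univ x).1 hx)
    have hx := mul_inv_cancel₀ h0
    refine ⟨fun h => h0 ((Ring.eq_self_iff_eq_zero_of_char_ne_two hF).1 h), fun h => h1 ?_,
      fun h => h2 ?_⟩
    · rw [h] at hx; linear_combination hx
    · rw [← h] at hx; linear_combination -hx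

theorem jacobsthalSum_neg_one_eq : jacobsthalSum F (-1) = ∑ x : F, χ (x ^ 3 - x) :=
  sum_congr rfl fun x _ => by rw [← map_mul]; ring_nf

theorem jacobsthalSum_neg_one_modEq (h8 : Fintype.card F % 8 = 1) :
    jacobsthalSum F (-1) ≡ -2 [ZMOD 8] := by
  have hsum := sum_quadraticChar_eq_card_sub (fun x : F => x ^ 3 - x)
  rw [card_zeros_cube_sub_self (ringChar_ne_two_of_odd_card (F := F) (by omega)),
    ← jacobsthalSum_neg_one_eq] at hsum
  obtain ⟨m, hm⟩ := four_dvd_card_quadraticChar_cube_sub_self_eq_neg_one h8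
  rw [hm] at hsum
  push_cast at hsum
  rw [Int.ModEq, hsum]
  omega

theorem exists_jacobsthalSum_neg_one_eq (h8 : Fintype.card F % 8 = 1) :
    ∃ u v : ℤ,
      jacobsthalSum F (-1) = -2 * u ∧ u ^ 2 + v ^ 2 = Fintype.card F ∧ u % 4 = 1 := by
  have hF := ringChar_ne_two_of_odd_card (F := F) (by omega)
  obtain ⟨g, hg⟩ := quadraticChar_exists_neg_one hF
  have hsq := jacobsthalSum_sq_add_sq_mul_nonsquare hF (neg_ne_zero.2 one_ne_zero) hg
  rw [quadraticChar_neg_one_of_card_mod_eight h8] at hsq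
  obtain ⟨k, hk⟩ := (jacobsthalSum_neg_one_modEq h8).symm.dvd
  set T := jacobsthalSum F (g * -1)
  obtain ⟨v, hv⟩ : Even T := (Int.even_pow' two_ne_zero).1
    ⟨2 * (Fintype.card F - (1 - 4 * k) ^ 2),
      by linear_combination hsq - (jacobsthalSum F (-1) - 2 + 8 * k) * hk⟩
  have huv : (1 - 4 * k) ^ 2 + v ^ 2 = Fintype.card F := by
    have h4 : 4 * ((1 - 4 * k) ^ 2 + v ^ 2) = 4 * Fintype.card F := by
      linear_combination hsq - (jacobsthalSum F (-1) - 2 + 8 * k) * hk - (T + 2 * v) * hv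
    linarith
  exact ⟨1 - 4 * k, v, by linear_combination hk, huv, by omega⟩

end QuadraticCharSums

theorem point_count_via_gaussian_general (p : ℕ) (hp : p.Prime) (h8 : p % 8 = 1)
    (a b : ℤ) (hab : (p : ℤ) = a ^ 2 + b ^ 2)
    (hprimary : ((⟨-2, 2⟩ : GaussianInt)) ∣ ((⟨a, b⟩ : GaussianInt) - 1)) :
    ((Nat.card {x : ZMod p × ZMod p | x.2 ^ 2 = x.1 ^ 3 - x.1} : ℤ) + 1
        = (p : ℤ) + 1 - 2 * a) ∧
    (((Nat.card {x : ZMod p × ZMod p | x.2 ^ 2 = x.1 ^ 3 - x.1} : ℤ) + 1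
        = (p : ℤ) - 1) ↔ ∃ a' : ℤ, (p : ℤ) = 1 + 4 * a' ^ 2) := by
  have := Fact.mk hp
  have hcard : Fintype.card (ZMod p) % 8 = 1 := by rwa [ZMod.card]
  have hpZ : Prime (p : ℤ) := Nat.prime_iff_prime_int.1 hp
  obtain ⟨hprim₁, hprim₂⟩ := GaussianInt.four_dvd_of_primary hprimary
  obtain ⟨c, rfl⟩ : 4 ∣ b := four_dvd_of_sq_add_sq (n := p) (by omega) hab.symm
    (Int.odd_iff.2 (by omega))
  have ha : a % 4 = 1 := by omega
  have hb : Even (4 * c) := ⟨2 * c, by ring⟩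
  obtain ⟨u, v, hJ, huv, hu⟩ := exists_jacobsthalSum_neg_one_eq hcard
  rw [ZMod.card] at huv
  obtain rfl : a = u := eq_of_sq_add_sq_eq hpZ hab.symm huv ha hu hb
  have hN : (Nat.card {x : ZMod p × ZMod p | x.2 ^ 2 = x.1 ^ 3 - x.1} : ℤ) + 1
      = (p : ℤ) + 1 - 2 * a := by
    rw [natCard_setOf_sq_eq (ringChar_ne_two_of_odd_card (by omega)) (fun x => x ^ 3 - x),
      ZMod.card, ← jacobsthalSum_neg_one_eq, hJ]
    ring
  refine ⟨hN, ?_⟩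
  rw [hN]
  constructor
  · intro h
    exact ⟨2 * c, by rw [hab, show a = 1 by omega]; ring⟩
  · rintro ⟨a', ha'⟩
    have := eq_of_sq_add_sq_eq hpZ hab.symm (c := 1) (d := 2 * a') (by rw [ha']; ring) ha rfl hb
    omega

/-- For a prime `p ≡ 1 (mod 8)` written as `p = a² + b²` with `a` odd and the Gaussian
integer `π = a + bi` primary (`π ≡ 1 mod (-2+2i)`), the number of projective
`F_p`-points of `E_3 : Y² = X³ - X` equals `p + 1 - 2a`; moreover this count equals
`p - 1` if and only if `p = 1 + 4a'²` for some integer `a'`. -/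
theorem point_count_via_gaussian (p : ℕ) (hp : p.Prime) (h8 : p % 8 = 1)
    (a b : ℤ) (ha : Odd a) (hab : (p : ℤ) = a ^ 2 + b ^ 2)
    (hprimary : ((⟨-2, 2⟩ : GaussianInt)) ∣ ((⟨a, b⟩ : GaussianInt) - 1)) :
    ((Nat.card {x : ZMod p × ZMod p | x.2 ^ 2 = x.1 ^ 3 - x.1} : ℤ) + 1
        = (p : ℤ) + 1 - 2 * a) ∧
    (((Nat.card {x : ZMod p × ZMod p | x.2 ^ 2 = x.1 ^ 3 - x.1} : ℤ) + 1
        = (p : ℤ) - 1) ↔ ∃ a' : ℤ, (p : ℤ) = 1 + 4 * a' ^ 2) :=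
  point_count_via_gaussian_general p hp h8 a b hab hprimary
end

section
/- (Lebesgue) If n and p are positive integers with p prime, r ≥ 1, and n^2 + 1 = p^r, then r = 1. -/
/-!
If `r ≥ 2`, then `n` is even (otherwise `n² + 1 ≡ 2 mod 4` would be an `r`-th power of an even
number) and `r` is odd (`n² + 1` lies strictly between two consecutive squares). Hence the factors
`n + i` and `n - i` of `p ^ r` are coprime in `ℤ[i]`, and as every unit of `ℤ[i]` is an `r`-th
power, `n + i = z ^ r` with `z = a + b i`. Since `b` divides the imaginary part `1` of `z ^ r`,
`b = ±1`, and comparing norms gives `a² + 1 = p`, so `a` is even and nonzero. In the binomial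
expansion of `(a + b i) ^ r` all terms with `a ^ k`, `k ≥ 3`, are divisible by `2 ^ (v + 1)`,
where `2 ^ v` exactly divides `C(r, 2) a²`; so the imaginary parts give
`1 - C(r, 2) a² ≡ ±1 mod 2 ^ (v + 1)`, which is impossible.
-/

local notation "ℤ[i]" => GaussianInt

theorem Nat.even_of_sq_add_one_eq_pow {n m r : ℕ} (h : n ^ 2 + 1 = m ^ r) (hr : 2 ≤ r) :
    Even n := by
  by_contra hn
  obtain ⟨k, rfl⟩ := Nat.not_even_iff_odd.1 hn
  have hsq : (2 * k + 1) ^ 2 + 1 = 4 * (k ^ 2 + k) + 2 := by ring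
  have h2 : 2 ∣ m :=
    Nat.prime_two.dvd_of_dvd_pow (n := r) ⟨2 * (k ^ 2 + k) + 1, by rw [← h, hsq]; ring⟩
  have h4 : 4 ∣ m ^ r := (pow_dvd_pow_of_dvd h2 2).trans (pow_dvd_pow m hr)
  rw [← h, hsq] at h4
  omega

theorem Nat.odd_of_sq_add_one_eq_pow {n m r : ℕ} (hn : n ≠ 0) (h : n ^ 2 + 1 = m ^ r) :
    Odd r := by
  by_contra hr
  obtain ⟨k, rfl⟩ := Nat.not_odd_iff_even.1 hr
  rw [← two_mul, pow_mul'] at h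
  have h1 : n < m ^ k := (Nat.pow_lt_pow_iff_left two_ne_zero).1 (by omega)
  have h2 : m ^ k < n + 1 :=
    (Nat.pow_lt_pow_iff_left two_ne_zero).1 (by nlinarith [Nat.pos_of_ne_zero hn])
  omega

theorem Zsqrtd.im_dvd_im_pow {d : ℤ} (z : ℤ√d) (k : ℕ) : z.im ∣ (z ^ k).im := by
  have hsub : (z.im : ℤ√d) ∣ z - z.re := ⟨⟨0, 1⟩, by ext <;> simp⟩
  have := ((Zsqrtd.intCast_dvd _ _).1 (hsub.trans (sub_dvd_pow_sub_pow z z.re k))).2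
  rwa [Zsqrtd.im_sub, ← Int.cast_pow, Zsqrtd.im_intCast, sub_zero] at this

theorem padicValNat_two_choose_two_lt {k : ℕ} (hk : 3 ≤ k) :
    padicValNat 2 (k.choose 2) < k - 2 := by
  have hodd {j q : ℕ} (hj : j ≠ 0) (hq : Odd q) : padicValNat 2 (j * q) < j := by
    rw [padicValNat.mul hj hq.pos.ne', padicValNat.eq_zero_of_not_dvd hq.not_two_dvd_nat, add_zero]
    exact Nat.padicValNat_lt_self hj
  obtain ⟨j, rfl | rfl⟩ := Nat.even_or_odd' k
  · have h : (2 * j).choose 2 = j * (2 * j - 1) := by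
      rw [Nat.choose_two_right, mul_assoc, Nat.mul_div_cancel_left _ two_pos]
    have := hodd (j := j) (q := 2 * j - 1) (by omega) ⟨j - 1, by omega⟩
    rw [h]; omega
  · have h : (2 * j + 1).choose 2 = j * (2 * j + 1) := by
      rw [Nat.choose_two_right, Nat.add_sub_cancel, mul_comm, mul_assoc,
        Nat.mul_div_cancel_left _ two_pos]
    have := hodd (j := j) (q := 2 * j + 1) (by omega) (odd_two_mul_add_one j)
    rw [h]; omega

theorem two_pow_dvd_choose_mul_pow {r k c : ℕ} (hc : Even c) (hc0 : c ≠ 0) (hk : 3 ≤ k) :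
    2 ^ (padicValNat 2 (r.choose 2 * c ^ 2) + 1) ∣ r.choose k * c ^ k := by
  rcases lt_or_ge r k with hrk | hkr
  · simp [Nat.choose_eq_zero_of_lt hrk]
  have hne {m l : ℕ} (h : l ≤ m) : m.choose l ≠ 0 := (Nat.choose_pos h).ne'
  have hc1 : 1 ≤ padicValNat 2 c := (padicValNat_dvd_iff_le hc0).1 (by simpa using hc.two_dvd)
  have hchoose := congrArg (padicValNat 2) (Nat.choose_mul (n := r) (k := k) (s := 2) (by omega))
  rw [padicValNat.mul (hne hkr) (hne (by omega)),
    padicValNat.mul (hne (by omega)) (hne (by omega))] at hchoose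
  rw [padicValNat_dvd_iff_le (mul_ne_zero (hne hkr) (pow_ne_zero _ hc0)),
    padicValNat.mul (hne (by omega)) (pow_ne_zero _ hc0),
    padicValNat.mul (hne hkr) (pow_ne_zero _ hc0), padicValNat.pow, padicValNat.pow]
  -- `v₂ C(r, k) ≥ v₂ C(r, 2) - v₂ C(k, 2)`, and `v₂ C(k, 2) < k - 2 ≤ (k - 2) v₂ c`
  have hk2 := padicValNat_two_choose_two_lt hk
  have : k - 2 ≤ (k - 2) * padicValNat 2 c := Nat.le_mul_of_pos_right _ hc1
  have : k * padicValNat 2 c = (k - 2) * padicValNat 2 c + 2 * padicValNat 2 c := by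
    rw [← add_mul]; congr 1; omega
  omega

open Finset in
theorem two_pow_dvd_add_pow_sub {R : Type*} [CommRing R] {a : ℤ} (ha : Even a) (ha0 : a ≠ 0)
    (y : R) (r : ℕ) :
    (2 : R) ^ (padicValNat 2 ((r + 2).choose 2 * a.natAbs ^ 2) + 1) ∣
      (a + y) ^ (r + 2) - y ^ r * (y ^ 2 + (r + 2) * a * y + (r + 2).choose 2 * a ^ 2) := by
  have hterm (k : ℕ) : (2 : ℤ) ^ (padicValNat 2 ((r + 2).choose 2 * a.natAbs ^ 2) + 1) ∣
      (r + 2).choose (k + 3) * a ^ (k + 3) := by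
    exact_mod_cast Int.natCast_dvd.2 (by
      simpa [Int.natAbs_mul, Int.natAbs_pow] using two_pow_dvd_choose_mul_pow (r := r + 2)
        (Int.natAbs_even.2 ha) (Int.natAbs_ne_zero.2 ha0) (by omega : 3 ≤ k + 3))
  have hexpand : (a + y) ^ (r + 2) - y ^ r * (y ^ 2 + (r + 2) * a * y + (r + 2).choose 2 * a ^ 2) =
      ∑ k ∈ range r, (a : R) ^ (k + 3) * y ^ (r + 2 - (k + 3)) * (r + 2).choose (k + 3) := by
    rw [(Commute.all _ _).add_pow, sum_range_succ', sum_range_succ', sum_range_succ']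
    simp only [zero_add, Nat.reduceAdd, Nat.add_sub_cancel, Nat.choose_one_right,
      Nat.choose_zero_right, Nat.sub_zero]
    push_cast
    ring
  rw [hexpand]
  refine dvd_sum fun k _ => ?_
  have := map_dvd (Int.castRingHom R) (hterm k)
  simp only [map_mul, map_pow, map_ofNat, map_natCast, eq_intCast] at this
  exact this.trans ⟨y ^ (r + 2 - (k + 3)), by ring⟩

theorem Int.not_modEq_one_sub_of_four_dvd {x : ℕ} (hx0 : x ≠ 0) (hx : 4 ∣ x) {u : ℤ}
    (hu : u ^ 2 = 1) : ¬u ≡ 1 - x [ZMOD 2 ^ (padicValNat 2 x + 1)] := by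
  intro h
  rcases sq_eq_one_iff.1 hu with rfl | rfl
  · refine pow_succ_padicValNat_not_dvd (p := 2) hx0 (Int.natCast_dvd_natCast.1 ?_)
    simpa using h.dvd
  · have hv : 2 ≤ padicValNat 2 x := (padicValNat_dvd_iff_le hx0).1 (by simpa using hx)
    have h4 : (4 : ℤ) ∣ 2 ^ (padicValNat 2 x + 1) := by
      exact_mod_cast pow_dvd_pow 2 (by omega : 2 ≤ padicValNat 2 x + 1)
    have := h4.trans h.dvd
    omega

namespace GaussianInt

theorem pow_four_eq_one_of_isUnit {u : ℤ[i]} (hu : IsUnit u) : u ^ 4 = 1 := by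
  have h : u.re * u.re + u.im * u.im = 1 := by
    simpa [Zsqrtd.norm_def] using (Zsqrtd.norm_eq_one_iff' (by norm_num) u).2 hu
  have hprod : u.re * u.im = 0 := by nlinarith [mul_self_nonneg (u.re * u.im)]
  ext <;> simp [pow_succ, Zsqrtd.re_mul, Zsqrtd.im_mul] <;> nlinarith

theorem exists_pow_eq_of_isUnit {u : ℤ[i]} (hu : IsUnit u) {r : ℕ} (hr : Odd r) :
    ∃ w : ℤ[i], w ^ r = u := by
  obtain ⟨j, rfl⟩ := hr
  refine ⟨u ^ (2 * j + 1), ?_⟩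
  rw [← pow_mul, show (2 * j + 1) * (2 * j + 1) = 4 * (j * j + j) + 1 by ring, pow_succ, pow_mul,
    pow_four_eq_one_of_isUnit hu, one_pow, one_mul]

theorem isCoprime_mk_one_mk_neg_one {n : ℤ} (hn : Even n) :
    IsCoprime (⟨n, 1⟩ : ℤ[i]) ⟨n, -1⟩ := by
  obtain ⟨k, rfl⟩ := hn
  -- `(n + i) (n - i) - 4 k² = 1` and `2 = i ((n - i) - (n + i))`
  refine ⟨⟨k + k, 2 * k ^ 2 - 1⟩, ⟨0, -2 * k ^ 2⟩, ?_⟩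
  ext <;> simp [Zsqrtd.re_mul, Zsqrtd.im_mul] <;> ring

theorem exists_pow_eq_mk_one {n m : ℤ} {r : ℕ} (hn : Even n) (hr : Odd r)
    (h : n ^ 2 + 1 = m ^ r) : ∃ z : ℤ[i], z ^ r = ⟨n, 1⟩ := by
  have hprod : (⟨n, 1⟩ : ℤ[i]) * ⟨n, -1⟩ = (m : ℤ[i]) ^ r := by
    rw [← Int.cast_pow, ← h]
    ext <;> simp [Zsqrtd.re_mul, Zsqrtd.im_mul, sq]
  obtain ⟨d, u, hu⟩ :=
    exists_associated_pow_of_mul_eq_pow' (isCoprime_mk_one_mk_neg_one hn) hprod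
  obtain ⟨w, hw⟩ := exists_pow_eq_of_isUnit u.isUnit hr
  exact ⟨d * w, by rw [mul_pow, hw, hu]⟩

theorem norm_eq_of_pow_eq_mk_one {z : ℤ[i]} {n m : ℤ} {r : ℕ} (hr : r ≠ 0) (hm : 0 ≤ m)
    (h : n ^ 2 + 1 = m ^ r) (hz : z ^ r = ⟨n, 1⟩) : z.norm = m := by
  refine (pow_left_inj₀ (norm_nonneg z) hm hr).1 ?_
  have hpow : (z ^ r).norm = z.norm ^ r := map_pow Zsqrtd.normMonoidHom z r
  rw [← hpow, hz, ← h, Zsqrtd.norm_def]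
  ring

theorem im_pow_modEq {z : ℤ[i]} (ha : Even z.re) (ha0 : z.re ≠ 0) (hb : z.im ^ 2 = 1) (j : ℕ) :
    (z ^ (2 * j + 3)).im ≡ (-1) ^ j * z.im * ((2 * j + 3).choose 2 * z.re ^ 2 - 1)
      [ZMOD 2 ^ (padicValNat 2 ((2 * j + 3).choose 2 * z.re.natAbs ^ 2) + 1)] := by
  set y : ℤ[i] := ⟨0, z.im⟩
  have hy : y ^ 2 = -1 := by
    ext <;> simp [sq, y, Zsqrtd.re_mul, Zsqrtd.im_mul]; linear_combination hb
  have hzy : z = (z.re : ℤ[i]) + y := by ext <;> simp [y]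
  have hyodd : y ^ (2 * j + 1) = ⟨0, (-1) ^ j * z.im⟩ := by
    have hsign : (-1 : ℤ[i]) ^ j = (((-1) ^ j : ℤ) : ℤ[i]) := by push_cast; rfl
    rw [pow_succ, pow_mul, hy, hsign]
    ext <;> simp only [Zsqrtd.re_mul, Zsqrtd.im_mul, Zsqrtd.re_intCast, Zsqrtd.im_intCast, y]
      <;> ring
  have htaylor := two_pow_dvd_add_pow_sub ha ha0 y (2 * j + 1)
  rw [← hzy, hyodd, hy, ← Int.cast_two, ← Int.cast_pow, show 2 * j + 1 + 2 = 2 * j + 3 by ring]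
    at htaylor
  have hre : ((z.re : ℤ[i]) ^ 2).re = z.re ^ 2 := by rw [← Int.cast_pow, Zsqrtd.re_intCast]
  refine (Int.modEq_iff_dvd.2 ?_).symm
  simpa [Zsqrtd.im_mul, hre, y, neg_add_eq_sub] using ((Zsqrtd.intCast_dvd _ _).1 htaylor).2

theorem im_pow_ne_one {z : ℤ[i]} (ha : Even z.re) (ha0 : z.re ≠ 0) (hb : z.im ^ 2 = 1) {r : ℕ}
    (hr : Odd r) (hr3 : 3 ≤ r) : (z ^ r).im ≠ 1 := by
  intro hz
  obtain ⟨j, rfl⟩ : ∃ j, r = 2 * j + 3 := ⟨(r - 3) / 2, by obtain ⟨k, rfl⟩ := hr; omega⟩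
  set C := (2 * j + 3).choose 2
  have hx0 : C * z.re.natAbs ^ 2 ≠ 0 :=
    mul_ne_zero (Nat.choose_pos (by omega)).ne' (by positivity)
  have h4x : 4 ∣ C * z.re.natAbs ^ 2 :=
    Dvd.dvd.mul_left (by simpa using pow_dvd_pow_of_dvd (Int.natAbs_even.2 ha).two_dvd 2) _
  set u := (-1) ^ j * z.im
  have hu : u ^ 2 = 1 := by
    rw [mul_pow, hb, mul_one, ← pow_mul, mul_comm, pow_mul, neg_one_sq, one_pow]
  have hmod := (im_pow_modEq ha ha0 hb j).mul_left u
  rw [hz, mul_one, ← mul_assoc, ← sq, hu, one_mul] at hmod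
  refine Int.not_modEq_one_sub_of_four_dvd hx0 h4x (u := -u) (by simpa using hu) ?_
  simpa [sq_abs] using hmod.neg

end GaussianInt

theorem lebesgue_nagell_general (n p r : ℕ) (hn : 1 ≤ n) (h : n ^ 2 + 1 = p ^ r) : r = 1 := by
  have hr : Odd r := Nat.odd_of_sq_add_one_eq_pow (by omega) h
  by_contra hr1
  have hr3 : 3 ≤ r := by obtain ⟨j, rfl⟩ := hr; omega
  have hn2 : Even n := Nat.even_of_sq_add_one_eq_pow h (by omega)
  have hp : Odd p :=
    (Nat.odd_pow_iff hr.pos.ne').1 (h ▸ (hn2.pow_of_ne_zero two_ne_zero).add_one)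
  have h' : (n : ℤ) ^ 2 + 1 = (p : ℤ) ^ r := by exact_mod_cast h
  obtain ⟨z, hz⟩ := GaussianInt.exists_pow_eq_mk_one (by exact_mod_cast hn2) hr h'
  have hb : z.im ^ 2 = 1 :=
    Int.isUnit_sq (isUnit_of_dvd_one (by simpa [hz] using Zsqrtd.im_dvd_im_pow z r))
  have hnorm : z.re ^ 2 + 1 = p := by
    rw [← GaussianInt.norm_eq_of_pow_eq_mk_one hr.pos.ne' (by positivity) h' hz, Zsqrtd.norm_def]
    linear_combination -hb
  have ha0 : z.re ≠ 0 := by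
    rintro h0
    have hp1 : p = 1 := by exact_mod_cast (by simpa [h0] using hnorm.symm : (p : ℤ) = 1)
    simp [hp1] at h
    omega
  have ha : Even z.re := by
    have : Odd (z.re ^ 2 + 1) := by rw [hnorm]; exact_mod_cast hp
    simpa [parity_simps] using this
  exact GaussianInt.im_pow_ne_one ha ha0 hb hr hr3 (by rw [hz])

/-- (Lebesgue) If `n ≥ 1`, `p` is prime, `r ≥ 1` and `n² + 1 = p^r`, then `r = 1`. -/
theorem lebesgue_nagell (n p r : ℕ) (hn : 1 ≤ n) (hp : p.Prime) (hr : 1 ≤ r)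
    (h : n ^ 2 + 1 = p ^ r) : r = 1 :=
  lebesgue_nagell_general n p r hn h
end

section
/- Let q be an odd prime power. Over F_{q^2}, for t,v with u^{(q+1)/2} = v^q - v, s = (t-v^q)^2/u^q, and -s^{(q+1)/2} = t^q - t, the relation (t - v^q)^{q+1} = (t^q - t)(v^q - v) holds, and this relation is equivalent to (t+v)^{q+1} = 2(tv + (tv)^q). -/
/-- Over `F_{q^2}`: if `u^{(q+1)/2} = v^q - v`, `s = (t-v^q)²/u^q` and
`-s^{(q+1)/2} = t^q - t` (with `u ≠ 0`), then `(t-v^q)^{q+1} = (t^q-t)(v^q-v)`;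
moreover for all `t, v ∈ F_{q^2}` this relation is equivalent to
`(t+v)^{q+1} = 2(tv + (tv)^q)`. -/
theorem chord_relation (q : ℕ) (hq : IsPrimePow q) (hodd : Odd q)
    (K : Type*) [Field K] [Fintype K] (hK : Fintype.card K = q ^ 2) :
    (∀ u v s t : K, u ≠ 0 →
        u ^ ((q + 1) / 2) = v ^ q - v →
        s = (t - v ^ q) ^ 2 / u ^ q →
        -s ^ ((q + 1) / 2) = t ^ q - t →
        (t - v ^ q) ^ (q + 1) = (t ^ q - t) * (v ^ q - v)) ∧
    (∀ t v : K,
        (t - v ^ q) ^ (q + 1) - (t ^ q - t) * (v ^ q - v)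
          = (t + v) ^ (q + 1) - 2 * (t * v + (t * v) ^ q)) := by
  classical
  obtain ⟨p, n, hp, hn, rfl⟩ := hq
  haveI hpfact : Fact (Nat.Prime p) := ⟨hp.nat_prime⟩
  -- char K = p
  haveI hchar : CharP K p := by
    obtain ⟨r, hr⟩ := CharP.exists K
    haveI := hr
    obtain ⟨m, hrp, hcard⟩ := FiniteField.card K r
    have hpr : p = r := by
      have hdvd : p ∣ Fintype.card K := by
        rw [hK]
        exact dvd_pow (dvd_pow_self p hn.ne') (by positivity)
      rw [hcard] at hdvd
      exact (Nat.prime_dvd_prime_iff_eq hp.nat_prime hrp).mp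
        (hp.nat_prime.dvd_of_dvd_pow hdvd)
    rwa [hpr]
  have hqq : ∀ a : K, a ^ (p ^ n) ^ 2 = a := by
    intro a
    rw [← hK, FiniteField.pow_card]
  have hadd : ∀ a b : K, (a + b) ^ p ^ n = a ^ p ^ n + b ^ p ^ n := fun a b =>
    add_pow_char_pow a b p n
  have hsub : ∀ a b : K, (a - b) ^ p ^ n = a ^ p ^ n - b ^ p ^ n := fun a b =>
    sub_pow_char_pow a b n
  have hsq : ∀ a : K, (a ^ p ^ n) ^ p ^ n = a := by
    intro a
    rw [← pow_mul, ← sq, hqq]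
  set q := p ^ n
  have h2 : 2 * ((q + 1) / 2) = q + 1 := by
    obtain ⟨k, hk⟩ := hodd
    omega
  constructor
  · intro u v s t hu huv hs hts
    set A := t - v ^ q with hA
    set B := v ^ q - v with hB
    have hBne : B ≠ 0 := by
      rw [← huv]
      exact pow_ne_zero _ hu
    have hBq : B ^ q = -B := by
      rw [hB, hsub, hsq]
      ring
    have h2' : (q + 1) / 2 * 2 = q + 1 := by
      obtain ⟨k, hk⟩ := hodd; omega
    have hsm : s ^ ((q + 1) / 2) = A ^ (q + 1) / (-B) := by
      rw [hs, div_pow, ← pow_mul, ← pow_mul, Nat.mul_comm 2 ((q + 1) / 2), h2',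
        Nat.mul_comm q ((q + 1) / 2), pow_mul, huv, hBq]
    rw [hsm] at hts
    have hfin : A ^ (q + 1) / B = t ^ q - t := by
      rw [← hts, div_neg, neg_neg]
    exact (div_eq_iff hBne).mp hfin
  · intro t v
    have e1 : (t - v ^ q) ^ (q + 1) = (t ^ q - v) * (t - v ^ q) := by
      rw [pow_succ, hsub, hsq]
    have e2 : (t + v) ^ (q + 1) = (t ^ q + v ^ q) * (t + v) := by
      rw [pow_succ, hadd]
    have e3 : (t * v) ^ q = t ^ q * v ^ q := mul_pow t v q
    rw [e1, e2, e3]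
    ring
end
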